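/- arXiv:2009.09286 — 12 statements merged into one kernel-verified Lean document; each statement's English description precedes it below -/
import Mathlib

section
/- Under instrument unconfoundedness, instrument overlap, monotonicity and instrumentation, the local average treatment effect is identified by inverse probability weighting: the denominator E[Z·D/π*] − E[(1−Z)·D/(1−π*)] equals P(D(1) > D(0)) > 0, and E[Y(1) − Y(0) | D(1) > D(0)] = ( E[Z·Y/π*(X)] − E[(1−Z)·Y/(1−π*(X))] ) / ( E[Z·D/π*(X)] − E[(1−Z)·D/(1−π*(X))] ). -/
/-!
Let `𝓜` be the σ-algebra generated by the potential variables `(Y(1), Y(0), D(1), D(0))` together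
with `𝓖`. Unconfoundedness gives `P[Z | 𝓜] = π*`: on the π-system of sets `s ∩ G` this is the
product rule for conditional independence. By the pull-out property, `E[Z V / π*] = E[V]` for
every `𝓜`-measurable `V`, and likewise `E[(1 - Z) V / (1 - π*)] = E[V]`. Since `Z` is binary,
`Z D = Z D(1)` and `Z Y = Z Y_{D(1)}` with `Y_d = d Y(1) + (1 - d) Y(0)` (symmetrically for
`1 - Z`), so the two IPW contrasts are `E[D(1) - D(0)]` and `E[Y_{D(1)} - Y_{D(0)}]`. Under
monotonicity `D(1) - D(0)` is the indicator of the compliers, which turns these into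
`P(D(1) > D(0))` and `E[(Y(1) - Y(0)); D(1) > D(0)]`; the complier probability is positive since
otherwise `D(1) = D(0)` almost surely, contradicting instrumentation.
-/

open MeasureTheory ProbabilityTheory MeasurableSpace Set

namespace MeasurableSpace

variable {α : Type*}

lemma isPiSystem_image2_inter (m₁ m₂ : MeasurableSpace α) :
    IsPiSystem (image2 (· ∩ ·) {s | MeasurableSet[m₁] s} {s | MeasurableSet[m₂] s}) := by
  rintro _ ⟨s₁, hs₁, t₁, ht₁, rfl⟩ _ ⟨s₂, hs₂, t₂, ht₂, rfl⟩ -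
  exact ⟨s₁ ∩ s₂, hs₁.inter hs₂, t₁ ∩ t₂, ht₁.inter ht₂, inter_inter_inter_comm _ _ _ _⟩

lemma sup_eq_generateFrom_image2_inter (m₁ m₂ : MeasurableSpace α) :
    m₁ ⊔ m₂ =
      generateFrom (image2 (· ∩ ·) {s | MeasurableSet[m₁] s} {s | MeasurableSet[m₂] s}) := by
  refine le_antisymm (sup_le (fun s hs => ?_) (fun t ht => ?_)) (generateFrom_le ?_)
  · exact measurableSet_generateFrom ⟨s, hs, univ, MeasurableSet.univ, inter_univ s⟩
  · exact measurableSet_generateFrom ⟨univ, MeasurableSet.univ, t, ht, univ_inter t⟩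
  · rintro _ ⟨s, hs, t, ht, rfl⟩
    exact (le_sup_left (b := m₂) s hs).inter (le_sup_right (a := m₁) t ht)

end MeasurableSpace

namespace MeasureTheory

variable {Ω E : Type*} [NormedAddCommGroup E] [NormedSpace ℝ E] {m mΩ : MeasurableSpace Ω}
  {μ : Measure Ω}

lemma setIntegral_eq_of_isPiSystem (hm : m ≤ mΩ) {C : Set (Set Ω)} (hgen : m = generateFrom C)
    (hC : IsPiSystem C) {f g : Ω → E} (hf : Integrable f μ) (hg : Integrable g μ)
    (huniv : ∫ x, f x ∂μ = ∫ x, g x ∂μ) (hCeq : ∀ s ∈ C, ∫ x in s, f x ∂μ = ∫ x in s, g x ∂μ)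
    {s : Set Ω} (hs : MeasurableSet[m] s) : ∫ x in s, f x ∂μ = ∫ x in s, g x ∂μ := by
  induction s, hs using induction_on_inter hgen hC with
  | empty => simp
  | basic s hs => exact hCeq s hs
  | compl s hs ih =>
    rw [setIntegral_compl (hm s hs) hf, setIntegral_compl (hm s hs) hg, huniv, ih]
  | iUnion s hdisj hs ih =>
    rw [integral_iUnion (fun n => hm _ (hs n)) hdisj hf.integrableOn,
      integral_iUnion (fun n => hm _ (hs n)) hdisj hg.integrableOn]
    exact tsum_congr ih

lemma integrable_and_integral_mul_div_of_condExp_ae_eq [IsFiniteMeasure μ] (hm : m ≤ mΩ)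
    {Z π V : Ω → ℝ} (hZ : Integrable Z μ) (hπ : μ[Z | m] =ᵐ[μ] π) (hπ0 : ∀ᵐ x ∂μ, π x ≠ 0)
    (hVπ : StronglyMeasurable[m] fun x => V x / π x)
    (hZV : Integrable (fun x => Z x * (V x / π x)) μ) :
    Integrable V μ ∧ ∫ x, Z x * (V x / π x) ∂μ = ∫ x, V x ∂μ := by
  have hpull : μ[fun x => Z x * (V x / π x) | m] =ᵐ[μ] V := by
    filter_upwards [condExp_mul_of_stronglyMeasurable_right hVπ hZV hZ, hπ, hπ0] with x h hx h0
    rwa [Pi.mul_apply, hx, mul_div_cancel₀ _ h0] at h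
  exact ⟨integrable_condExp.congr hpull,
    (integral_condExp hm).symm.trans (integral_congr_ae hpull)⟩

lemma integral_ipw_sub_eq [IsFiniteMeasure μ] (hm : m ≤ mΩ) {Z π V₁ V₀ V : Ω → ℝ}
    (hZ : Integrable Z μ) (hZbin : ∀ᵐ x ∂μ, Z x = 0 ∨ Z x = 1) (hπ : μ[Z | m] =ᵐ[μ] π)
    (hπ01 : ∀ᵐ x ∂μ, 0 < π x ∧ π x < 1) (hπm : Measurable[m] π)
    (hV₁ : Measurable[m] V₁) (hV₀ : Measurable[m] V₀)
    (hV : ∀ᵐ x ∂μ, V x = Z x * V₁ x + (1 - Z x) * V₀ x)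
    (h₁ : Integrable (fun x => Z x * V x / π x) μ)
    (h₀ : Integrable (fun x => (1 - Z x) * V x / (1 - π x)) μ) :
    ∫ x, Z x * V x / π x ∂μ - ∫ x, (1 - Z x) * V x / (1 - π x) ∂μ = ∫ x, (V₁ x - V₀ x) ∂μ := by
  have hπc : μ[fun x => 1 - Z x | m] =ᵐ[μ] fun x => 1 - π x := by
    have h := condExp_sub (integrable_const (1 : ℝ)) hZ m
    rw [condExp_const hm] at h
    filter_upwards [h, hπ] with x hx hπx
    exact hx.trans (by rw [Pi.sub_apply, hπx])
  have hV₁Z : (fun x => Z x * (V₁ x / π x)) =ᵐ[μ] fun x => Z x * V x / π x := by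
    filter_upwards [hZbin, hV] with x hZx hVx
    rcases hZx with h | h <;> simp [hVx, h]
  have hV₀Z : (fun x => (1 - Z x) * (V₀ x / (1 - π x))) =ᵐ[μ]
      fun x => (1 - Z x) * V x / (1 - π x) := by
    filter_upwards [hZbin, hV] with x hZx hVx
    rcases hZx with h | h <;> simp [hVx, h]
  obtain ⟨hV₁int, hV₁eq⟩ := integrable_and_integral_mul_div_of_condExp_ae_eq hm hZ hπ
    (by filter_upwards [hπ01] with x hx using hx.1.ne') (hV₁.div hπm).stronglyMeasurable
    (h₁.congr hV₁Z.symm)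
  obtain ⟨hV₀int, hV₀eq⟩ := integrable_and_integral_mul_div_of_condExp_ae_eq
    (Z := fun x => 1 - Z x) (π := fun x => 1 - π x) hm ((integrable_const 1).sub hZ) hπc
    (by filter_upwards [hπ01] with x hx using (sub_pos.mpr hx.2).ne')
    (hV₀.div (measurable_const.sub hπm)).stronglyMeasurable (h₀.congr hV₀Z.symm)
  rw [← integral_congr_ae hV₁Z, ← integral_congr_ae hV₀Z, hV₁eq, hV₀eq,
    integral_sub hV₁int hV₀int]

lemma integral_sub_mul_eq_setIntegral_lt {D₁ D₀ : Ω → ℝ} (hD₁ : Measurable D₁)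
    (hD₀ : Measurable D₀) (hD₁bin : ∀ᵐ x ∂μ, D₁ x = 0 ∨ D₁ x = 1)
    (hD₀bin : ∀ᵐ x ∂μ, D₀ x = 0 ∨ D₀ x = 1) (hmono : ∀ᵐ x ∂μ, D₀ x ≤ D₁ x) (g : Ω → ℝ) :
    ∫ x, (D₁ x - D₀ x) * g x ∂μ = ∫ x in {x | D₀ x < D₁ x}, g x ∂μ := by
  rw [← integral_indicator (measurableSet_lt hD₀ hD₁)]
  refine integral_congr_ae ?_
  filter_upwards [hD₁bin, hD₀bin, hmono] with x h₁ h₀ hle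
  by_cases hlt : D₀ x < D₁ x
  · have hjump : D₁ x - D₀ x = 1 := by
      rcases h₁ with h₁ | h₁ <;> rcases h₀ with h₀ | h₀ <;> linarith
    simp [hlt, hjump]
  · simp [le_antisymm (not_lt.mp hlt) hle]

lemma measure_lt_pos_of_measure_eq_ne {D₁ D₀ : Ω → ℝ} {c : ℝ} (hmono : ∀ᵐ x ∂μ, D₀ x ≤ D₁ x)
    (h : μ {x | D₁ x = c} ≠ μ {x | D₀ x = c}) : 0 < μ {x | D₀ x < D₁ x} := by
  refine pos_iff_ne_zero.mpr fun h0 => h (measure_congr ?_)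
  filter_upwards [hmono, measure_eq_zero_iff_ae_notMem.mp h0] with x hle hnlt
  change (D₁ x = c) = (D₀ x = c)
  rw [le_antisymm (not_lt.mp hnlt) hle]

end MeasureTheory

namespace ProbabilityTheory

lemma CondIndep.condExp_indicator_sup_ae_eq {Ω : Type*} {m' m₁ m₂ mΩ : MeasurableSpace Ω}
    [StandardBorelSpace Ω] {μ : Measure Ω} [IsFiniteMeasure μ] {hm' : m' ≤ mΩ}
    (hm₁ : m₁ ≤ mΩ) (hm₂ : m₂ ≤ mΩ) (h : CondIndep m' m₁ m₂ hm' μ) {t : Set Ω}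
    (ht : MeasurableSet[m₂] t) :
    μ⟦t | m₁ ⊔ m'⟧ =ᵐ[μ] μ⟦t | m'⟧ := by
  have hsup : m₁ ⊔ m' ≤ mΩ := sup_le hm₁ hm'
  have htΩ : MeasurableSet t := hm₂ t ht
  have hind : Integrable (t.indicator fun _ => (1 : ℝ)) μ := (integrable_const 1).indicator htΩ
  refine (ae_eq_condExp_of_forall_setIntegral_eq hsup hind
    (fun _ _ _ => integrable_condExp.integrableOn) (fun A hA _ => ?_)
    (stronglyMeasurable_condExp.mono (le_sup_right : m' ≤ m₁ ⊔ m')).aestronglyMeasurable).symm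
  refine setIntegral_eq_of_isPiSystem hsup (sup_eq_generateFrom_image2_inter m₁ m')
    (isPiSystem_image2_inter m₁ m') integrable_condExp hind
    (integral_condExp hm') ?_ hA
  rintro _ ⟨s, hs, G, hG, rfl⟩
  have hsΩ : MeasurableSet s := hm₁ s hs
  have hindep : μ⟦s ∩ t | m'⟧ =ᵐ[μ] μ⟦s | m'⟧ * μ⟦t | m'⟧ :=
    (condIndep_iff m' m₁ m₂ hm' hm₁ hm₂ μ).mp h s t hs ht
  have hpull : μ[s.indicator (μ⟦t | m'⟧) | m'] =ᵐ[μ] μ⟦s | m'⟧ * μ⟦t | m'⟧ := by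
    have hmul : (s.indicator fun _ => (1 : ℝ)) * μ⟦t | m'⟧ = s.indicator (μ⟦t | m'⟧) := by
      funext x
      by_cases hx : x ∈ s <;> simp [hx]
    rw [← hmul]
    exact condExp_mul_of_stronglyMeasurable_right stronglyMeasurable_condExp
      (hmul ▸ integrable_condExp.indicator hsΩ) ((integrable_const 1).indicator hsΩ)
  calc ∫ x in s ∩ G, (μ⟦t | m'⟧) x ∂μ = ∫ x in G, s.indicator (μ⟦t | m'⟧) x ∂μ := by
        rw [setIntegral_indicator hsΩ, inter_comm]
    _ = ∫ x in G, (μ⟦s ∩ t | m'⟧) x ∂μ := by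
        rw [← setIntegral_condExp hm' (integrable_condExp.indicator hsΩ) hG]
        refine setIntegral_congr_ae (hm' G hG) ?_
        filter_upwards [hpull, hindep] with x h1 h2 _
        rw [h1, h2]
    _ = ∫ x in s ∩ G, t.indicator (fun _ => (1 : ℝ)) x ∂μ := by
        rw [setIntegral_condExp hm' ((integrable_const (1 : ℝ)).indicator (hsΩ.inter htΩ)) hG,
          ← indicator_indicator, setIntegral_indicator hsΩ, inter_comm]

lemma CondIndepFun.condExp_comap_sup_ae_eq {Ω β : Type*} {𝓖 mΩ : MeasurableSpace Ω}
    [StandardBorelSpace Ω] [mβ : MeasurableSpace β] {μ : Measure Ω} [IsFiniteMeasure μ]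
    {h𝓖 : 𝓖 ≤ mΩ} {W : Ω → β} {Z : Ω → ℝ} (hW : Measurable W) (hZ : Measurable Z)
    (hZbin : ∀ᵐ x ∂μ, Z x = 0 ∨ Z x = 1) (h : CondIndepFun 𝓖 h𝓖 W Z μ) :
    μ[Z | mβ.comap W ⊔ 𝓖] =ᵐ[μ] μ[Z | 𝓖] := by
  have hZind : Z =ᵐ[μ] (Z ⁻¹' {1}).indicator fun _ => 1 := by
    filter_upwards [hZbin] with x hx
    rcases hx with hx | hx <;> simp [hx]
  calc μ[Z | mβ.comap W ⊔ 𝓖] =ᵐ[μ] μ⟦Z ⁻¹' {1} | mβ.comap W ⊔ 𝓖⟧ := condExp_congr_ae hZind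
    _ =ᵐ[μ] μ⟦Z ⁻¹' {1} | 𝓖⟧ :=
      ((condIndepFun_iff_condIndep _ _ _ _ _).mp h).condExp_indicator_sup_ae_eq hW.comap_le
        hZ.comap_le ⟨{1}, measurableSet_singleton 1, rfl⟩
    _ =ᵐ[μ] μ[Z | 𝓖] := condExp_congr_ae hZind.symm

end ProbabilityTheory

theorem stmt_1_general
    {Ω : Type*} [mΩ : MeasurableSpace Ω] [StandardBorelSpace Ω]
    (P : Measure Ω) [IsProbabilityMeasure P]
    (Z D1 D0 Y1 Y0 : Ω → ℝ)
    (hZmeas : Measurable Z) (hD1meas : Measurable D1) (hD0meas : Measurable D0)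
    (hY1meas : Measurable Y1) (hY0meas : Measurable Y0)
    (hZbin : ∀ᵐ ω ∂P, Z ω = 0 ∨ Z ω = 1)
    (hD1bin : ∀ᵐ ω ∂P, D1 ω = 0 ∨ D1 ω = 1)
    (hD0bin : ∀ᵐ ω ∂P, D0 ω = 0 ∨ D0 ω = 1)
    (𝓖 : MeasurableSpace Ω)
    (h𝓖le : 𝓖 ≤ mΩ)
    (πs : Ω → ℝ) (hπs : πs = P[Z | 𝓖])
    (hunconf : CondIndepFun 𝓖 h𝓖le (fun ω => (Y1 ω, Y0 ω, D1 ω, D0 ω)) Z P)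
    (hoverlap : ∀ᵐ ω ∂P, 0 < πs ω ∧ πs ω < 1)
    (hmono : ∀ᵐ ω ∂P, D0 ω ≤ D1 ω)
    (hinstr : P {ω | D1 ω = 1} ≠ P {ω | D0 ω = 1})
    (D Y : Ω → ℝ)
    (hD : D = fun ω => Z ω * D1 ω + (1 - Z ω) * D0 ω)
    (hY : Y = fun ω => D ω * Y1 ω + (1 - D ω) * Y0 ω)
    (hint1 : Integrable (fun ω => Z ω * D ω / πs ω) P)
    (hint2 : Integrable (fun ω => (1 - Z ω) * D ω / (1 - πs ω)) P)
    (hint3 : Integrable (fun ω => Z ω * Y ω / πs ω) P)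
    (hint4 : Integrable (fun ω => (1 - Z ω) * Y ω / (1 - πs ω)) P) :
    ((∫ ω, Z ω * D ω / πs ω ∂P) - (∫ ω, (1 - Z ω) * D ω / (1 - πs ω) ∂P)
        = (P {ω | D0 ω < D1 ω}).toReal) ∧
    0 < (P {ω | D0 ω < D1 ω}).toReal ∧
    (∫ ω in {ω | D0 ω < D1 ω}, (Y1 ω - Y0 ω) ∂P) / (P {ω | D0 ω < D1 ω}).toReal =
      ((∫ ω, Z ω * Y ω / πs ω ∂P) - (∫ ω, (1 - Z ω) * Y ω / (1 - πs ω) ∂P)) /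
        ((∫ ω, Z ω * D ω / πs ω ∂P) - (∫ ω, (1 - Z ω) * D ω / (1 - πs ω) ∂P)) := by
  set W := fun ω => (Y1 ω, Y0 ω, D1 ω, D0 ω)
  have hW : Measurable[mΩ] W := hY1meas.prodMk (hY0meas.prodMk (hD1meas.prodMk hD0meas))
  set 𝓜 := MeasurableSpace.comap W inferInstance ⊔ 𝓖
  have h𝓜 : 𝓜 ≤ mΩ := sup_le hW.comap_le h𝓖le
  have hW𝓜 : Measurable[𝓜] W := (comap_measurable W).mono le_sup_left le_rfl
  have hY1𝓜 : Measurable[𝓜] Y1 := hW𝓜.fst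
  have hY0𝓜 : Measurable[𝓜] Y0 := hW𝓜.snd.fst
  have hD1𝓜 : Measurable[𝓜] D1 := hW𝓜.snd.snd.fst
  have hD0𝓜 : Measurable[𝓜] D0 := hW𝓜.snd.snd.snd
  have hπ𝓜 : Measurable[𝓜] πs := hπs ▸ (stronglyMeasurable_condExp.mono le_sup_right).measurable
  have hZ𝓜 : P[Z | 𝓜] =ᵐ[P] πs := hπs ▸ hunconf.condExp_comap_sup_ae_eq hW hZmeas hZbin
  have hZint : Integrable Z P := by
    refine Integrable.of_bound hZmeas.aestronglyMeasurable 1 ?_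
    filter_upwards [hZbin] with ω hω
    rcases hω with h | h <;> simp [h]
  have hD_ipw := integral_ipw_sub_eq h𝓜 hZint hZbin hZ𝓜 hoverlap hπ𝓜 hD1𝓜 hD0𝓜
    (ae_of_all _ fun ω => by rw [hD]) hint1 hint2
  have hY_ipw := integral_ipw_sub_eq (V₁ := fun ω => D1 ω * Y1 ω + (1 - D1 ω) * Y0 ω)
    (V₀ := fun ω => D0 ω * Y1 ω + (1 - D0 ω) * Y0 ω) h𝓜 hZint hZbin hZ𝓜 hoverlap hπ𝓜
    ((hD1𝓜.mul hY1𝓜).add ((measurable_const.sub hD1𝓜).mul hY0𝓜))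
    ((hD0𝓜.mul hY1𝓜).add ((measurable_const.sub hD0𝓜).mul hY0𝓜))
    (by filter_upwards [hZbin] with ω hω; rcases hω with h | h <;> simp [hY, hD, h]) hint3 hint4
  have hcomplier := integral_sub_mul_eq_setIntegral_lt hD1meas hD0meas hD1bin hD0bin hmono
  have hDen : ∫ ω, Z ω * D ω / πs ω ∂P - ∫ ω, (1 - Z ω) * D ω / (1 - πs ω) ∂P
      = (P {ω | D0 ω < D1 ω}).toReal := by
    simpa [hD_ipw, measureReal_def] using hcomplier fun _ => 1
  have hNum : ∫ ω, Z ω * Y ω / πs ω ∂P - ∫ ω, (1 - Z ω) * Y ω / (1 - πs ω) ∂P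
      = ∫ ω in {ω | D0 ω < D1 ω}, (Y1 ω - Y0 ω) ∂P := by
    rw [hY_ipw, ← hcomplier]
    exact integral_congr_ae (ae_of_all _ fun ω => by ring)
  exact ⟨hDen, ENNReal.toReal_pos (measure_lt_pos_of_measure_eq_ne hmono hinstr).ne'
    (measure_ne_top _ _), by rw [hDen, hNum]⟩

/-- Under instrument unconfoundedness, overlap, monotonicity and instrumentation,
the LATE is identified by inverse probability weighting. -/
theorem stmt_1
    {Ω : Type*} [mΩ : MeasurableSpace Ω] [StandardBorelSpace Ω] [Nonempty Ω]
    {𝒳 : Type*} [MeasurableSpace 𝒳] [StandardBorelSpace 𝒳]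
    (P : Measure Ω) [IsProbabilityMeasure P]
    (Z D1 D0 Y1 Y0 : Ω → ℝ) (X : Ω → 𝒳)
    (hZmeas : Measurable Z) (hD1meas : Measurable D1) (hD0meas : Measurable D0)
    (hY1meas : Measurable Y1) (hY0meas : Measurable Y0) (hXmeas : Measurable X)
    (hZbin : ∀ᵐ ω ∂P, Z ω = 0 ∨ Z ω = 1)
    (hD1bin : ∀ᵐ ω ∂P, D1 ω = 0 ∨ D1 ω = 1)
    (hD0bin : ∀ᵐ ω ∂P, D0 ω = 0 ∨ D0 ω = 1)
    (𝓖 : MeasurableSpace Ω) (h𝓖 : 𝓖 = MeasurableSpace.comap X inferInstance)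
    (h𝓖le : 𝓖 ≤ mΩ)
    (πs : Ω → ℝ) (hπs : πs = P[Z | 𝓖])
    (hunconf : CondIndepFun 𝓖 h𝓖le (fun ω => (Y1 ω, Y0 ω, D1 ω, D0 ω)) Z P)
    (hoverlap : ∀ᵐ ω ∂P, 0 < πs ω ∧ πs ω < 1)
    (hmono : ∀ᵐ ω ∂P, D0 ω ≤ D1 ω)
    (hinstr : P {ω | D1 ω = 1} ≠ P {ω | D0 ω = 1})
    (D Y : Ω → ℝ)
    (hD : D = fun ω => Z ω * D1 ω + (1 - Z ω) * D0 ω)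
    (hY : Y = fun ω => D ω * Y1 ω + (1 - D ω) * Y0 ω)
    (hint1 : Integrable (fun ω => Z ω * D ω / πs ω) P)
    (hint2 : Integrable (fun ω => (1 - Z ω) * D ω / (1 - πs ω)) P)
    (hint3 : Integrable (fun ω => Z ω * Y ω / πs ω) P)
    (hint4 : Integrable (fun ω => (1 - Z ω) * Y ω / (1 - πs ω)) P)
    (hint5 : Integrable (fun ω => Y1 ω - Y0 ω) P) :
    ((∫ ω, Z ω * D ω / πs ω ∂P) - (∫ ω, (1 - Z ω) * D ω / (1 - πs ω) ∂P)
        = (P {ω | D0 ω < D1 ω}).toReal) ∧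
    0 < (P {ω | D0 ω < D1 ω}).toReal ∧
    (∫ ω in {ω | D0 ω < D1 ω}, (Y1 ω - Y0 ω) ∂P) / (P {ω | D0 ω < D1 ω}).toReal =
      ((∫ ω, Z ω * Y ω / πs ω ∂P) - (∫ ω, (1 - Z ω) * Y ω / (1 - πs ω) ∂P)) /
        ((∫ ω, Z ω * D ω / πs ω ∂P) - (∫ ω, (1 - Z ω) * D ω / (1 - πs ω) ∂P)) :=
  stmt_1_general (mΩ := mΩ) P Z D1 D0 Y1 Y0 hZmeas hD1meas hD0meas hY1meas hY0meas hZbin hD1bin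
    hD0bin 𝓖 h𝓖le πs hπs hunconf hoverlap hmono hinstr D Y hD hY hint1 hint2 hint3 hint4
end

section
/- Under instrument unconfoundedness, instrument overlap, monotonicity and instrumentation, the parameter θ₁ = E[Y(1) | D(1) > D(0)] is identified by outcome-regression averaging: with μ₁ = E[Z·D·Y | 𝓖]/π*, μ₀ = E[(1−Z)·D·Y | 𝓖]/(1−π*), ν₁ = E[Z·D | 𝓖]/π*, ν₀ = E[(1−Z)·D | 𝓖]/(1−π*) (the regression functions of D·Y and D given the instrument level and X), one has E[ν₁] − E[ν₀] = P(D(1) > D(0)) > 0 and E[Y(1) | D(1) > D(0)] = ( E[μ₁] − E[μ₀] ) / ( E[ν₁] − E[ν₀] ). -/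
/-!
Given `𝓖`, the instrument is independent of the potential variables under the conditional law
`condExpKernel P 𝓖 ω` for almost every `ω`, so `E[Z·W | 𝓖] = π*·E[W | 𝓖]` for every integrable
function `W` of them. Since `Z·D·Y = Z·D(1)·Y(1)` and `(1 − Z)·D·Y = (1 − Z)·D(0)·Y(1)`, dividing by
the propensity and averaging gives `E[μ₁] − E[μ₀] = E[(D(1) − D(0))·Y(1)]` and
`E[ν₁] − E[ν₀] = E[D(1) − D(0)]`. By monotonicity `D(1) − D(0)` is the indicator of the compliers
`{D(0) < D(1)}`, and instrumentation makes that event non-null.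
-/

open MeasureTheory ProbabilityTheory

namespace MeasureTheory

variable {Ω : Type*} {mΩ : MeasurableSpace Ω} {μ : Measure Ω} {f g : Ω → ℝ}

lemma ae_norm_le_one_of_ae_binary (hf : ∀ᵐ ω ∂μ, f ω = 0 ∨ f ω = 1) :
    ∀ᵐ ω ∂μ, ‖f ω‖ ≤ 1 :=
  hf.mono fun ω h ↦ by rcases h with h | h <;> simp [h]

lemma integral_mul_sub_integral_mul_eq_setIntegral [IsFiniteMeasure μ] (hf : Measurable f)
    (hg : Measurable g) (hf01 : ∀ᵐ ω ∂μ, f ω = 0 ∨ f ω = 1) (hg01 : ∀ᵐ ω ∂μ, g ω = 0 ∨ g ω = 1)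
    (hgf : ∀ᵐ ω ∂μ, g ω ≤ f ω) {h : Ω → ℝ} (hh : Integrable h μ) :
    ∫ ω, f ω * h ω ∂μ - ∫ ω, g ω * h ω ∂μ = ∫ ω in {ω | g ω < f ω}, h ω ∂μ := by
  rw [← integral_sub (hh.bdd_mul hf.aestronglyMeasurable (ae_norm_le_one_of_ae_binary hf01))
    (hh.bdd_mul hg.aestronglyMeasurable (ae_norm_le_one_of_ae_binary hg01)),
    ← integral_indicator (measurableSet_lt hg hf)]
  refine integral_congr_ae ?_
  filter_upwards [hf01, hg01, hgf] with ω hfω hgω hgfω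
  rcases hfω with hfω | hfω <;> rcases hgω with hgω | hgω
  · simp [hfω, hgω]
  · linarith
  · simp [hfω, hgω]
  · simp [hfω, hgω]

lemma measure_setOf_lt_ne_zero (hgf : ∀ᵐ ω ∂μ, g ω ≤ f ω)
    (hfg : μ {ω | f ω = 1} ≠ μ {ω | g ω = 1}) : μ {ω | g ω < f ω} ≠ 0 := by
  intro h0
  refine hfg (measure_congr ?_)
  filter_upwards [measure_eq_zero_iff_ae_notMem.mp h0, hgf] with ω hlt hle
  change (f ω = 1) = (g ω = 1)
  rw [le_antisymm (not_lt.mp hlt) hle]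

end MeasureTheory

namespace ProbabilityTheory

variable {Ω : Type*} {m mΩ : MeasurableSpace Ω} [StandardBorelSpace Ω] {hm : m ≤ mΩ}
  {μ : Measure Ω} [IsFiniteMeasure μ]

lemma CondIndepFun.ae_indepFun_condExpKernel {f g : Ω → ℝ} (hf : Measurable f)
    (hg : Measurable g) (hfg : CondIndepFun m hm f g μ) :
    ∀ᵐ ω ∂μ, IndepFun f g (condExpKernel μ m ω) := by
  have h := (condIndepFun_iff_map_prod_eq_prod_map_map hf hg).mp hfg
  filter_upwards [ae_of_ae_trim hm h] with ω hω
  rw [indepFun_iff_map_prod_eq_prod_map_map hf.aemeasurable hg.aemeasurable]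
  simpa [Kernel.map_apply _ (hf.prodMk hg), Kernel.map_apply _ hf, Kernel.map_apply _ hg,
    Kernel.prod_apply] using hω

lemma CondIndepFun.condExp_mul {f g : Ω → ℝ} (hf : Measurable f) (hg : Measurable g)
    (hfg : CondIndepFun m hm f g μ) (hf_int : Integrable f μ) (hg_int : Integrable g μ)
    (hfg_int : Integrable (f * g) μ) :
    μ[f * g | m] =ᵐ[μ] μ[f | m] * μ[g | m] := by
  filter_upwards [condExp_ae_eq_integral_condExpKernel hm hfg_int,
    condExp_ae_eq_integral_condExpKernel hm hf_int, condExp_ae_eq_integral_condExpKernel hm hg_int,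
    hfg.ae_indepFun_condExpKernel hf hg] with ω hfgω hfω hgω hindω
  rw [Pi.mul_apply, hfgω, hfω, hgω]
  exact hindω.integral_mul_eq_mul_integral hf.aestronglyMeasurable hg.aestronglyMeasurable

lemma integral_condExp_div_eq_integral {T W g π : Ω → ℝ} {C : ℝ} (hT : Measurable T)
    (hW : Measurable W) (hTW : CondIndepFun m hm T W μ) (hT_bdd : ∀ᵐ ω ∂μ, ‖T ω‖ ≤ C)
    (hW_int : Integrable W μ) (hg : g =ᵐ[μ] T * W) (hπ : π =ᵐ[μ] μ[T | m])
    (hπ0 : ∀ᵐ ω ∂μ, π ω ≠ 0) :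
    ∫ ω, μ[g | m] ω / π ω ∂μ = ∫ ω, W ω ∂μ := by
  have hT_int : Integrable T μ := .of_bound hT.aestronglyMeasurable C hT_bdd
  have hTW_int : Integrable (T * W) μ := hW_int.bdd_mul hT.aestronglyMeasurable hT_bdd
  have hratio : (fun ω ↦ μ[g | m] ω / π ω) =ᵐ[μ] μ[W | m] := by
    filter_upwards [condExp_congr_ae hg, hTW.condExp_mul hT hW hT_int hW_int hTW_int, hπ, hπ0]
      with ω hgω hmulω hπω hπ0ω
    rw [hgω, hmulω, Pi.mul_apply, ← hπω, mul_div_cancel_left₀ _ hπ0ω]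
  rw [integral_congr_ae hratio, integral_condExp hm]

lemma integral_regression_div_propensity {T D₁ D₀ Y₁ Y₀ D Y π : Ω → ℝ}
    (hT : Measurable T) (hD₁ : Measurable D₁) (hY₁ : Measurable Y₁)
    (hT01 : ∀ᵐ ω ∂μ, T ω = 0 ∨ T ω = 1) (hD₁01 : ∀ᵐ ω ∂μ, D₁ ω = 0 ∨ D₁ ω = 1)
    (hY₁_int : Integrable Y₁ μ) (hTD₁Y₁ : CondIndepFun m hm T (fun ω ↦ (D₁ ω, Y₁ ω)) μ)
    (hπ : π =ᵐ[μ] μ[T | m]) (hπ0 : ∀ᵐ ω ∂μ, π ω ≠ 0)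
    (hD : D = fun ω ↦ T ω * D₁ ω + (1 - T ω) * D₀ ω)
    (hY : Y = fun ω ↦ D ω * Y₁ ω + (1 - D ω) * Y₀ ω) :
    ∫ ω, μ[fun ω ↦ T ω * D ω * Y ω | m] ω / π ω ∂μ = ∫ ω, D₁ ω * Y₁ ω ∂μ ∧
      ∫ ω, μ[fun ω ↦ T ω * D ω | m] ω / π ω ∂μ = ∫ ω, D₁ ω ∂μ := by
  have hT_bdd := ae_norm_le_one_of_ae_binary hT01
  have hD₁_bdd := ae_norm_le_one_of_ae_binary hD₁01
  constructor
  · refine integral_condExp_div_eq_integral hT (hD₁.mul hY₁)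
      (hTD₁Y₁.comp measurable_id (by fun_prop : Measurable fun v : ℝ × ℝ ↦ v.1 * v.2)) hT_bdd
      (hY₁_int.bdd_mul hD₁.aestronglyMeasurable hD₁_bdd) ?_ hπ hπ0
    filter_upwards [hT01, hD₁01] with ω hTω hD₁ω
    rcases hTω with hTω | hTω <;> rcases hD₁ω with hD₁ω | hD₁ω <;> simp [hD, hY, hTω, hD₁ω]
  · refine integral_condExp_div_eq_integral hT hD₁
      (hTD₁Y₁.comp measurable_id (by fun_prop : Measurable fun v : ℝ × ℝ ↦ v.1)) hT_bdd
      (.of_bound hD₁.aestronglyMeasurable 1 hD₁_bdd) ?_ hπ hπ0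
    filter_upwards [hT01] with ω hTω
    rcases hTω with hTω | hTω <;> simp [hD, hTω]

end ProbabilityTheory

theorem stmt_3_general
    {Ω : Type*} [mΩ : MeasurableSpace Ω] [StandardBorelSpace Ω]
    (P : Measure Ω) [IsProbabilityMeasure P]
    (Z D1 D0 Y1 Y0 : Ω → ℝ)
    (hZmeas : Measurable Z) (hD1meas : Measurable D1) (hD0meas : Measurable D0)
    (hY1meas : Measurable Y1)
    (hZbin : ∀ᵐ ω ∂P, Z ω = 0 ∨ Z ω = 1)
    (hD1bin : ∀ᵐ ω ∂P, D1 ω = 0 ∨ D1 ω = 1)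
    (hD0bin : ∀ᵐ ω ∂P, D0 ω = 0 ∨ D0 ω = 1)
    (𝓖 : MeasurableSpace Ω)
    (h𝓖le : 𝓖 ≤ mΩ)
    (πs : Ω → ℝ) (hπs : πs = P[Z | 𝓖])
    (hunconf : CondIndepFun 𝓖 h𝓖le (fun ω => (Y1 ω, Y0 ω, D1 ω, D0 ω)) Z P)
    (hoverlap : ∀ᵐ ω ∂P, 0 < πs ω ∧ πs ω < 1)
    (hmono : ∀ᵐ ω ∂P, D0 ω ≤ D1 ω)
    (hinstr : P {ω | D1 ω = 1} ≠ P {ω | D0 ω = 1})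
    (D Y : Ω → ℝ)
    (hD : D = fun ω => Z ω * D1 ω + (1 - Z ω) * D0 ω)
    (hY : Y = fun ω => D ω * Y1 ω + (1 - D ω) * Y0 ω)
    (μ1 μ0 ν1 ν0 : Ω → ℝ)
    (hμ1 : μ1 = fun ω => (P[fun ω' => Z ω' * D ω' * Y ω' | 𝓖]) ω / πs ω)
    (hμ0 : μ0 = fun ω => (P[fun ω' => (1 - Z ω') * D ω' * Y ω' | 𝓖]) ω / (1 - πs ω))
    (hν1 : ν1 = fun ω => (P[fun ω' => Z ω' * D ω' | 𝓖]) ω / πs ω)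
    (hν0 : ν0 = fun ω => (P[fun ω' => (1 - Z ω') * D ω' | 𝓖]) ω / (1 - πs ω))
    (hY1int : Integrable Y1 P) :
    ((∫ ω, ν1 ω ∂P) - (∫ ω, ν0 ω ∂P) = (P {ω | D0 ω < D1 ω}).toReal) ∧
    0 < (P {ω | D0 ω < D1 ω}).toReal ∧
    (∫ ω in {ω | D0 ω < D1 ω}, Y1 ω ∂P) / (P {ω | D0 ω < D1 ω}).toReal =
      ((∫ ω, μ1 ω ∂P) - (∫ ω, μ0 ω ∂P)) / ((∫ ω, ν1 ω ∂P) - (∫ ω, ν0 ω ∂P)) := by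
  have hZc01 : ∀ᵐ ω ∂P, 1 - Z ω = 0 ∨ 1 - Z ω = 1 :=
    hZbin.mono fun ω h ↦ by rcases h with h | h <;> simp [h]
  have hπc : (fun ω => 1 - πs ω) =ᵐ[P] P[fun ω => 1 - Z ω | 𝓖] := by
    filter_upwards [condExp_sub (integrable_const (1 : ℝ))
      (.of_bound hZmeas.aestronglyMeasurable 1 (ae_norm_le_one_of_ae_binary hZbin)) 𝓖] with ω h
    simp only [hπs, condExp_const h𝓖le] at h ⊢
    exact h.symm
  obtain ⟨hμ1_eq, hν1_eq⟩ := integral_regression_div_propensity hZmeas hD1meas hY1meas hZbin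
    hD1bin hY1int (hunconf.symm.comp measurable_id
      (by fun_prop : Measurable fun v : ℝ × ℝ × ℝ × ℝ ↦ (v.2.2.1, v.1)))
    (by rw [hπs]) (hoverlap.mono fun ω h ↦ h.1.ne') hD hY
  -- The level `Z = 0` is the level `1 - Z = 1`, with `D0` and `D1` exchanging roles.
  obtain ⟨hμ0_eq, hν0_eq⟩ := integral_regression_div_propensity (D₀ := D1) (hZmeas.const_sub 1)
    hD0meas hY1meas hZc01 hD0bin hY1int (hunconf.symm.comp (measurable_const.sub measurable_id)
      (by fun_prop : Measurable fun v : ℝ × ℝ × ℝ × ℝ ↦ (v.2.2.2, v.1)))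
    hπc (hoverlap.mono fun ω h ↦ (sub_pos.mpr h.2).ne') (by rw [hD]; ext; ring) hY
  have hν : (∫ ω, ν1 ω ∂P) - (∫ ω, ν0 ω ∂P) = (P {ω | D0 ω < D1 ω}).toReal := by
    rw [hν1, hν0, hν1_eq, hν0_eq]
    simpa [measureReal_def] using integral_mul_sub_integral_mul_eq_setIntegral hD1meas hD0meas
      hD1bin hD0bin hmono (integrable_const (1 : ℝ))
  have hμ : (∫ ω, μ1 ω ∂P) - (∫ ω, μ0 ω ∂P) = ∫ ω in {ω | D0 ω < D1 ω}, Y1 ω ∂P := by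
    rw [hμ1, hμ0, hμ1_eq, hμ0_eq]
    exact integral_mul_sub_integral_mul_eq_setIntegral hD1meas hD0meas hD1bin hD0bin hmono hY1int
  refine ⟨hν, ENNReal.toReal_pos (measure_setOf_lt_ne_zero hmono hinstr) (measure_ne_top _ _), ?_⟩
  rw [hμ, hν]

/-- Under instrument unconfoundedness, overlap, monotonicity and instrumentation,
`θ₁ = E[Y(1) | D(1) > D(0)]` is identified by outcome-regression averaging. -/
theorem stmt_3
    {Ω : Type*} [mΩ : MeasurableSpace Ω] [StandardBorelSpace Ω] [Nonempty Ω]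
    {𝒳 : Type*} [MeasurableSpace 𝒳] [StandardBorelSpace 𝒳]
    (P : Measure Ω) [IsProbabilityMeasure P]
    (Z D1 D0 Y1 Y0 : Ω → ℝ) (X : Ω → 𝒳)
    (hZmeas : Measurable Z) (hD1meas : Measurable D1) (hD0meas : Measurable D0)
    (hY1meas : Measurable Y1) (hY0meas : Measurable Y0) (hXmeas : Measurable X)
    (hZbin : ∀ᵐ ω ∂P, Z ω = 0 ∨ Z ω = 1)
    (hD1bin : ∀ᵐ ω ∂P, D1 ω = 0 ∨ D1 ω = 1)
    (hD0bin : ∀ᵐ ω ∂P, D0 ω = 0 ∨ D0 ω = 1)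
    (𝓖 : MeasurableSpace Ω) (h𝓖 : 𝓖 = MeasurableSpace.comap X inferInstance)
    (h𝓖le : 𝓖 ≤ mΩ)
    (πs : Ω → ℝ) (hπs : πs = P[Z | 𝓖])
    (hunconf : CondIndepFun 𝓖 h𝓖le (fun ω => (Y1 ω, Y0 ω, D1 ω, D0 ω)) Z P)
    (hoverlap : ∀ᵐ ω ∂P, 0 < πs ω ∧ πs ω < 1)
    (hmono : ∀ᵐ ω ∂P, D0 ω ≤ D1 ω)
    (hinstr : P {ω | D1 ω = 1} ≠ P {ω | D0 ω = 1})
    (D Y : Ω → ℝ)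
    (hD : D = fun ω => Z ω * D1 ω + (1 - Z ω) * D0 ω)
    (hY : Y = fun ω => D ω * Y1 ω + (1 - D ω) * Y0 ω)
    (μ1 μ0 ν1 ν0 : Ω → ℝ)
    (hμ1 : μ1 = fun ω => (P[fun ω' => Z ω' * D ω' * Y ω' | 𝓖]) ω / πs ω)
    (hμ0 : μ0 = fun ω => (P[fun ω' => (1 - Z ω') * D ω' * Y ω' | 𝓖]) ω / (1 - πs ω))
    (hν1 : ν1 = fun ω => (P[fun ω' => Z ω' * D ω' | 𝓖]) ω / πs ω)
    (hν0 : ν0 = fun ω => (P[fun ω' => (1 - Z ω') * D ω' | 𝓖]) ω / (1 - πs ω))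
    (hμ1int : Integrable μ1 P) (hμ0int : Integrable μ0 P)
    (hν1int : Integrable ν1 P) (hν0int : Integrable ν0 P)
    (hZDYint : Integrable (fun ω => Z ω * D ω * Y ω) P)
    (hZDYint' : Integrable (fun ω => (1 - Z ω) * D ω * Y ω) P)
    (hZDint : Integrable (fun ω => Z ω * D ω) P)
    (hZDint' : Integrable (fun ω => (1 - Z ω) * D ω) P)
    (hY1int : Integrable Y1 P) :
    ((∫ ω, ν1 ω ∂P) - (∫ ω, ν0 ω ∂P) = (P {ω | D0 ω < D1 ω}).toReal) ∧
    0 < (P {ω | D0 ω < D1 ω}).toReal ∧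
    (∫ ω in {ω | D0 ω < D1 ω}, Y1 ω ∂P) / (P {ω | D0 ω < D1 ω}).toReal =
      ((∫ ω, μ1 ω ∂P) - (∫ ω, μ0 ω ∂P)) / ((∫ ω, ν1 ω ∂P) - (∫ ω, ν0 ω ∂P)) :=
  stmt_3_general (mΩ := mΩ) P Z D1 D0 Y1 Y0 hZmeas hD1meas hD0meas hY1meas hZbin hD1bin hD0bin 𝓖
    h𝓖le πs hπs hunconf hoverlap hmono hinstr D Y hD hY μ1 μ0 ν1 ν0 hμ1 hμ0 hν1 hν0 hY1int
end

section
/- Under instrument unconfoundedness, instrument overlap, monotonicity and instrumentation, the local average treatment effect is identified by outcome-regression averaging: with μ₁ = E[Z·Y | 𝓖]/π*, μ₀ = E[(1−Z)·Y | 𝓖]/(1−π*), ν₁ = E[Z·D | 𝓖]/π*, ν₀ = E[(1−Z)·D | 𝓖]/(1−π*) (the regression functions of Y and D given the instrument level and X), one has E[ν₁] − E[ν₀] = P(D(1) > D(0)) > 0 and E[Y(1) − Y(0) | D(1) > D(0)] = ( E[μ₁] − E[μ₀] ) / ( E[ν₁] − E[ν₀] ). -/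
/-!
Conditionally on `𝓖`, the instrument `Z` is independent of every function `W` of the potential
outcomes, so `E[Z W | 𝓖] = π* E[W | 𝓖]`; this is read off the regular conditional distribution
`condExpKernel`, under which the two variables are independent for almost every `ω`. As `Z` is
binary, `Z D = Z D(1)` and `Z Y = Z Y(D(1))`, so dividing by `π*` (resp. `1 - π*`) and integrating
turns `ν₁, ν₀, μ₁, μ₀` into `E[D(1)], E[D(0)], E[Y(D(1))], E[Y(D(0))]`. By monotonicity
`D(1) - D(0)` is the indicator of the compliers `{D(0) < D(1)}`, which yields both the
denominator `P(D(1) > D(0))` and the numerator `E[(Y(1) - Y(0)); D(1) > D(0)]`, and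
instrumentation makes the denominator nonzero.
-/

open MeasureTheory ProbabilityTheory

theorem condExp_mul_ae_eq_of_condIndepFun {Ω : Type*} {m mΩ : MeasurableSpace Ω}
    [StandardBorelSpace Ω] [Nonempty Ω] (hm : m ≤ mΩ) {μ : Measure Ω} [IsFiniteMeasure μ]
    {X Y : Ω → ℝ} (hX : Measurable X) (hY : Measurable Y) (hXY : CondIndepFun m hm X Y μ)
    (hXi : Integrable X μ) (hYi : Integrable Y μ) (hXYi : Integrable (X * Y) μ) :
    μ[X * Y | m] =ᵐ[μ] μ[X | m] * μ[Y | m] := by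
  have hker := ae_of_ae_trim hm ((condIndepFun_iff_map_prod_eq_prod_map_map hX hY).1 hXY)
  filter_upwards [hker, condExp_ae_eq_integral_condExpKernel hm hXYi,
    condExp_ae_eq_integral_condExpKernel hm hXi,
    condExp_ae_eq_integral_condExpKernel hm hYi] with ω hω hXY hX' hY'
  have hind : X ⟂ᵢ[condExpKernel μ m ω] Y := by
    rw [indepFun_iff_map_prod_eq_prod_map_map hX.aemeasurable hY.aemeasurable]
    simpa only [Kernel.map_apply _ (hX.prodMk hY), Kernel.map_apply _ hX, Kernel.map_apply _ hY,
      Kernel.prod_apply] using hω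
  rw [Pi.mul_apply, hXY, hX', hY']
  exact hind.integral_mul_eq_mul_integral hX.aestronglyMeasurable hY.aestronglyMeasurable

section ZeroOne

variable {Ω : Type*} {mΩ : MeasurableSpace Ω} {μ : Measure Ω} {V W : Ω → ℝ}

lemma norm_le_one_of_eq_zero_or_eq_one {x : ℝ} (hx : x = 0 ∨ x = 1) : ‖x‖ ≤ 1 := by
  rcases hx with rfl | rfl <;> norm_num

lemma one_sub_eq_zero_or_eq_one {x : ℝ} (hx : x = 0 ∨ x = 1) : 1 - x = 0 ∨ 1 - x = 1 := by
  rcases hx with rfl | rfl <;> norm_num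

lemma MeasureTheory.Integrable.of_ae_eq_zero_or_eq_one [IsFiniteMeasure μ]
    (hV : AEStronglyMeasurable V μ) (hV01 : ∀ᵐ ω ∂μ, V ω = 0 ∨ V ω = 1) : Integrable V μ :=
  .of_bound hV 1 (hV01.mono fun _ ↦ norm_le_one_of_eq_zero_or_eq_one)

lemma MeasureTheory.Integrable.mul_of_ae_eq_zero_or_eq_one (hW : Integrable W μ)
    (hV : AEStronglyMeasurable V μ) (hV01 : ∀ᵐ ω ∂μ, V ω = 0 ∨ V ω = 1) :
    Integrable (V * W) μ :=
  hW.bdd_mul hV (hV01.mono fun _ ↦ norm_le_one_of_eq_zero_or_eq_one)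

lemma integrable_mul_add_one_sub_mul {Y1 Y0 : Ω → ℝ} (hV : Measurable V)
    (hV01 : ∀ᵐ ω ∂μ, V ω = 0 ∨ V ω = 1) (hY1 : Integrable Y1 μ) (hY0 : Integrable Y0 μ) :
    Integrable (fun ω ↦ V ω * Y1 ω + (1 - V ω) * Y0 ω) μ :=
  (hY1.mul_of_ae_eq_zero_or_eq_one hV.aestronglyMeasurable hV01).add
    (hY0.mul_of_ae_eq_zero_or_eq_one (measurable_const.sub hV).aestronglyMeasurable
      (hV01.mono fun _ ↦ one_sub_eq_zero_or_eq_one))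

lemma integral_eq_measureReal_of_ae_eq_zero_or_eq_one (hV : Measurable V)
    (hV01 : ∀ᵐ ω ∂μ, V ω = 0 ∨ V ω = 1) : ∫ ω, V ω ∂μ = μ.real {ω | V ω = 1} := by
  have hV_eq : V =ᵐ[μ] {ω | V ω = 1}.indicator 1 := by
    filter_upwards [hV01] with ω hω
    rcases hω with hω | hω <;> simp [hω]
  rw [integral_congr_ae hV_eq]
  exact integral_indicator_one (hV (measurableSet_singleton 1))

end ZeroOne

section Propensity

variable {Ω : Type*} {m mΩ : MeasurableSpace Ω} [StandardBorelSpace Ω] [Nonempty Ω]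
  (hm : m ≤ mΩ) {μ : Measure Ω} [IsFiniteMeasure μ] {V W U π : Ω → ℝ}

theorem integral_condExp_div_eq_of_condIndepFun (hV : Measurable V)
    (hV01 : ∀ᵐ ω ∂μ, V ω = 0 ∨ V ω = 1) (hW : Measurable W) (hWi : Integrable W μ)
    (hWV : CondIndepFun m hm W V μ) (hU : U =ᵐ[μ] V * W) (hπ : π =ᵐ[μ] μ[V | m])
    (hπ0 : ∀ᵐ ω ∂μ, π ω ≠ 0) :
    ∫ ω, μ[U | m] ω / π ω ∂μ = ∫ ω, W ω ∂μ := by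
  have hmul := condExp_mul_ae_eq_of_condIndepFun hm hV hW hWV.symm
    (.of_ae_eq_zero_or_eq_one hV.aestronglyMeasurable hV01) hWi
    (hWi.mul_of_ae_eq_zero_or_eq_one hV.aestronglyMeasurable hV01)
  calc ∫ ω, μ[U | m] ω / π ω ∂μ = ∫ ω, μ[W | m] ω ∂μ := by
        refine integral_congr_ae ?_
        filter_upwards [(condExp_congr_ae hU).trans hmul, hπ, hπ0] with ω hUω hπω hπ0ω
        rw [hUω, Pi.mul_apply, ← hπω, mul_div_cancel_left₀ _ hπ0ω]
    _ = ∫ ω, W ω ∂μ := integral_condExp hm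

theorem integral_condExp_div_one_sub_eq_of_condIndepFun (hV : Measurable V)
    (hV01 : ∀ᵐ ω ∂μ, V ω = 0 ∨ V ω = 1) (hW : Measurable W) (hWi : Integrable W μ)
    (hWV : CondIndepFun m hm W V μ) (hU : U =ᵐ[μ] (1 - V) * W)
    (hπ1 : ∀ᵐ ω ∂μ, μ[V | m] ω ≠ 1) :
    ∫ ω, μ[U | m] ω / (1 - μ[V | m] ω) ∂μ = ∫ ω, W ω ∂μ := by
  have hπ : (fun ω ↦ 1 - μ[V | m] ω) =ᵐ[μ] μ[1 - V | m] := by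
    have hVi := Integrable.of_ae_eq_zero_or_eq_one hV.aestronglyMeasurable hV01
    filter_upwards [condExp_sub (integrable_const (μ := μ) (1 : ℝ)) hVi m] with ω hω
    rw [Pi.sub_apply, condExp_const hm] at hω
    exact hω.symm
  exact integral_condExp_div_eq_of_condIndepFun hm (measurable_const.sub hV)
    (hV01.mono fun _ ↦ one_sub_eq_zero_or_eq_one) hW hWi
    (hWV.comp measurable_id (measurable_const.sub measurable_id)) hU hπ
    (hπ1.mono fun _ h ↦ sub_ne_zero.mpr h.symm)

end Propensity

section Compliers

variable {Ω : Type*} {mΩ : MeasurableSpace Ω} {μ : Measure Ω} {D1 D0 : Ω → ℝ}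

lemma sub_ae_eq_indicator_lt (hD1 : ∀ᵐ ω ∂μ, D1 ω = 0 ∨ D1 ω = 1)
    (hD0 : ∀ᵐ ω ∂μ, D0 ω = 0 ∨ D0 ω = 1) (hmono : ∀ᵐ ω ∂μ, D0 ω ≤ D1 ω) :
    (fun ω ↦ D1 ω - D0 ω) =ᵐ[μ] {ω | D0 ω < D1 ω}.indicator 1 := by
  filter_upwards [hD1, hD0, hmono] with ω h1 h0 hle
  rcases h1 with h1 | h1 <;> rcases h0 with h0 | h0 <;> simp [h1, h0]
  linarith

variable (hD1 : Measurable D1) (hD0 : Measurable D0) (hD1_01 : ∀ᵐ ω ∂μ, D1 ω = 0 ∨ D1 ω = 1)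
  (hD0_01 : ∀ᵐ ω ∂μ, D0 ω = 0 ∨ D0 ω = 1) (hmono : ∀ᵐ ω ∂μ, D0 ω ≤ D1 ω)
include hD1 hD0 hD1_01 hD0_01 hmono

lemma integral_sub_integral_eq_measureReal_setOf_lt [IsFiniteMeasure μ] :
    ∫ ω, D1 ω ∂μ - ∫ ω, D0 ω ∂μ = μ.real {ω | D0 ω < D1 ω} := by
  rw [← integral_sub (.of_ae_eq_zero_or_eq_one hD1.aestronglyMeasurable hD1_01)
    (.of_ae_eq_zero_or_eq_one hD0.aestronglyMeasurable hD0_01),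
    integral_congr_ae (sub_ae_eq_indicator_lt hD1_01 hD0_01 hmono)]
  exact integral_indicator_one (measurableSet_lt hD0 hD1)

lemma measureReal_setOf_lt_pos [IsFiniteMeasure μ] (hne : μ {ω | D1 ω = 1} ≠ μ {ω | D0 ω = 1}) :
    0 < μ.real {ω | D0 ω < D1 ω} := by
  have h := integral_sub_integral_eq_measureReal_setOf_lt hD1 hD0 hD1_01 hD0_01 hmono
  rw [integral_eq_measureReal_of_ae_eq_zero_or_eq_one hD1 hD1_01,
    integral_eq_measureReal_of_ae_eq_zero_or_eq_one hD0 hD0_01] at h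
  refine measureReal_nonneg.lt_of_ne fun h0 ↦ hne ?_
  rw [← measureReal_eq_measureReal_iff]
  linarith

lemma integral_sub_integral_eq_setIntegral_setOf_lt {Y1 Y0 : Ω → ℝ} (hY1 : Integrable Y1 μ)
    (hY0 : Integrable Y0 μ) :
    ∫ ω, (D1 ω * Y1 ω + (1 - D1 ω) * Y0 ω) ∂μ - ∫ ω, (D0 ω * Y1 ω + (1 - D0 ω) * Y0 ω) ∂μ =
      ∫ ω in {ω | D0 ω < D1 ω}, (Y1 ω - Y0 ω) ∂μ := by
  rw [← integral_sub (integrable_mul_add_one_sub_mul hD1 hD1_01 hY1 hY0)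
    (integrable_mul_add_one_sub_mul hD0 hD0_01 hY1 hY0),
    ← integral_indicator (measurableSet_lt hD0 hD1)]
  refine integral_congr_ae ?_
  filter_upwards [sub_ae_eq_indicator_lt hD1_01 hD0_01 hmono] with ω hω
  calc D1 ω * Y1 ω + (1 - D1 ω) * Y0 ω - (D0 ω * Y1 ω + (1 - D0 ω) * Y0 ω)
      = (D1 ω - D0 ω) * (Y1 ω - Y0 ω) := by ring
    _ = {ω | D0 ω < D1 ω}.indicator (fun ω ↦ Y1 ω - Y0 ω) ω := by
      rw [hω]; by_cases h : D0 ω < D1 ω <;> simp [h]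

end Compliers

theorem stmt_4_general
    {Ω : Type*} [mΩ : MeasurableSpace Ω] [StandardBorelSpace Ω] [Nonempty Ω]
    (P : Measure Ω) [IsProbabilityMeasure P]
    (Z D1 D0 Y1 Y0 : Ω → ℝ)
    (hZmeas : Measurable Z) (hD1meas : Measurable D1) (hD0meas : Measurable D0)
    (hY1meas : Measurable Y1) (hY0meas : Measurable Y0)
    (hZbin : ∀ᵐ ω ∂P, Z ω = 0 ∨ Z ω = 1)
    (hD1bin : ∀ᵐ ω ∂P, D1 ω = 0 ∨ D1 ω = 1)
    (hD0bin : ∀ᵐ ω ∂P, D0 ω = 0 ∨ D0 ω = 1)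
    (𝓖 : MeasurableSpace Ω)
    (h𝓖le : 𝓖 ≤ mΩ)
    (πs : Ω → ℝ) (hπs : πs = P[Z | 𝓖])
    (hunconf : CondIndepFun 𝓖 h𝓖le (fun ω => (Y1 ω, Y0 ω, D1 ω, D0 ω)) Z P)
    (hoverlap : ∀ᵐ ω ∂P, 0 < πs ω ∧ πs ω < 1)
    (hmono : ∀ᵐ ω ∂P, D0 ω ≤ D1 ω)
    (hinstr : P {ω | D1 ω = 1} ≠ P {ω | D0 ω = 1})
    (D Y : Ω → ℝ)
    (hD : D = fun ω => Z ω * D1 ω + (1 - Z ω) * D0 ω)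
    (hY : Y = fun ω => D ω * Y1 ω + (1 - D ω) * Y0 ω)
    (μ1 μ0 ν1 ν0 : Ω → ℝ)
    (hμ1 : μ1 = fun ω => (P[fun ω' => Z ω' * Y ω' | 𝓖]) ω / πs ω)
    (hμ0 : μ0 = fun ω => (P[fun ω' => (1 - Z ω') * Y ω' | 𝓖]) ω / (1 - πs ω))
    (hν1 : ν1 = fun ω => (P[fun ω' => Z ω' * D ω' | 𝓖]) ω / πs ω)
    (hν0 : ν0 = fun ω => (P[fun ω' => (1 - Z ω') * D ω' | 𝓖]) ω / (1 - πs ω))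
    (hY1int : Integrable Y1 P) (hY0int : Integrable Y0 P) :
    ((∫ ω, ν1 ω ∂P) - (∫ ω, ν0 ω ∂P) = (P {ω | D0 ω < D1 ω}).toReal) ∧
    0 < (P {ω | D0 ω < D1 ω}).toReal ∧
    (∫ ω in {ω | D0 ω < D1 ω}, (Y1 ω - Y0 ω) ∂P) / (P {ω | D0 ω < D1 ω}).toReal =
      ((∫ ω, μ1 ω ∂P) - (∫ ω, μ0 ω ∂P)) / ((∫ ω, ν1 ω ∂P) - (∫ ω, ν0 ω ∂P)) := by
  subst hπs
  have hπ0 : ∀ᵐ ω ∂P, P[Z | 𝓖] ω ≠ 0 := hoverlap.mono fun _ h ↦ h.1.ne'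
  have hπ1 : ∀ᵐ ω ∂P, P[Z | 𝓖] ω ≠ 1 := hoverlap.mono fun _ h ↦ h.2.ne
  have hcomp (φ : ℝ × ℝ × ℝ × ℝ → ℝ) (hφ : Measurable φ) :
      CondIndepFun 𝓖 h𝓖le (fun ω ↦ φ (Y1 ω, Y0 ω, D1 ω, D0 ω)) Z P :=
    hunconf.comp hφ measurable_id
  have hIν1 : ∫ ω, ν1 ω ∂P = ∫ ω, D1 ω ∂P := by
    rw [hν1]
    exact integral_condExp_div_eq_of_condIndepFun h𝓖le hZmeas hZbin hD1meas
      (.of_ae_eq_zero_or_eq_one hD1meas.aestronglyMeasurable hD1bin)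
      (hcomp (fun p ↦ p.2.2.1) (by fun_prop))
      (by filter_upwards [hZbin] with ω h; rcases h with h | h <;> simp [hD, h]) .rfl hπ0
  have hIν0 : ∫ ω, ν0 ω ∂P = ∫ ω, D0 ω ∂P := by
    rw [hν0]
    exact integral_condExp_div_one_sub_eq_of_condIndepFun h𝓖le hZmeas hZbin hD0meas
      (.of_ae_eq_zero_or_eq_one hD0meas.aestronglyMeasurable hD0bin)
      (hcomp (fun p ↦ p.2.2.2) (by fun_prop))
      (by filter_upwards [hZbin] with ω h; rcases h with h | h <;> simp [hD, h]) hπ1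
  have hIμ1 : ∫ ω, μ1 ω ∂P = ∫ ω, (D1 ω * Y1 ω + (1 - D1 ω) * Y0 ω) ∂P := by
    rw [hμ1]
    exact integral_condExp_div_eq_of_condIndepFun h𝓖le hZmeas hZbin (by fun_prop)
      (integrable_mul_add_one_sub_mul hD1meas hD1bin hY1int hY0int)
      (hcomp (fun p ↦ p.2.2.1 * p.1 + (1 - p.2.2.1) * p.2.1) (by fun_prop))
      (by filter_upwards [hZbin] with ω h; rcases h with h | h <;> simp [hY, hD, h]) .rfl hπ0
  have hIμ0 : ∫ ω, μ0 ω ∂P = ∫ ω, (D0 ω * Y1 ω + (1 - D0 ω) * Y0 ω) ∂P := by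
    rw [hμ0]
    exact integral_condExp_div_one_sub_eq_of_condIndepFun h𝓖le hZmeas hZbin (by fun_prop)
      (integrable_mul_add_one_sub_mul hD0meas hD0bin hY1int hY0int)
      (hcomp (fun p ↦ p.2.2.2 * p.1 + (1 - p.2.2.2) * p.2.1) (by fun_prop))
      (by filter_upwards [hZbin] with ω h; rcases h with h | h <;> simp [hY, hD, h]) hπ1
  rw [hIν1, hIν0, hIμ1, hIμ0, ← measureReal_def,
    integral_sub_integral_eq_measureReal_setOf_lt hD1meas hD0meas hD1bin hD0bin hmono,
    integral_sub_integral_eq_setIntegral_setOf_lt hD1meas hD0meas hD1bin hD0bin hmono hY1int hY0int]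
  exact ⟨rfl, measureReal_setOf_lt_pos hD1meas hD0meas hD1bin hD0bin hmono hinstr, rfl⟩

/-- Under instrument unconfoundedness, overlap, monotonicity and instrumentation,
the LATE is identified by outcome-regression averaging. -/
theorem stmt_4
    {Ω : Type*} [mΩ : MeasurableSpace Ω] [StandardBorelSpace Ω] [Nonempty Ω]
    {𝒳 : Type*} [MeasurableSpace 𝒳] [StandardBorelSpace 𝒳]
    (P : Measure Ω) [IsProbabilityMeasure P]
    (Z D1 D0 Y1 Y0 : Ω → ℝ) (X : Ω → 𝒳)
    (hZmeas : Measurable Z) (hD1meas : Measurable D1) (hD0meas : Measurable D0)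
    (hY1meas : Measurable Y1) (hY0meas : Measurable Y0) (hXmeas : Measurable X)
    (hZbin : ∀ᵐ ω ∂P, Z ω = 0 ∨ Z ω = 1)
    (hD1bin : ∀ᵐ ω ∂P, D1 ω = 0 ∨ D1 ω = 1)
    (hD0bin : ∀ᵐ ω ∂P, D0 ω = 0 ∨ D0 ω = 1)
    (𝓖 : MeasurableSpace Ω) (h𝓖 : 𝓖 = MeasurableSpace.comap X inferInstance)
    (h𝓖le : 𝓖 ≤ mΩ)
    (πs : Ω → ℝ) (hπs : πs = P[Z | 𝓖])
    (hunconf : CondIndepFun 𝓖 h𝓖le (fun ω => (Y1 ω, Y0 ω, D1 ω, D0 ω)) Z P)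
    (hoverlap : ∀ᵐ ω ∂P, 0 < πs ω ∧ πs ω < 1)
    (hmono : ∀ᵐ ω ∂P, D0 ω ≤ D1 ω)
    (hinstr : P {ω | D1 ω = 1} ≠ P {ω | D0 ω = 1})
    (D Y : Ω → ℝ)
    (hD : D = fun ω => Z ω * D1 ω + (1 - Z ω) * D0 ω)
    (hY : Y = fun ω => D ω * Y1 ω + (1 - D ω) * Y0 ω)
    (μ1 μ0 ν1 ν0 : Ω → ℝ)
    (hμ1 : μ1 = fun ω => (P[fun ω' => Z ω' * Y ω' | 𝓖]) ω / πs ω)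
    (hμ0 : μ0 = fun ω => (P[fun ω' => (1 - Z ω') * Y ω' | 𝓖]) ω / (1 - πs ω))
    (hν1 : ν1 = fun ω => (P[fun ω' => Z ω' * D ω' | 𝓖]) ω / πs ω)
    (hν0 : ν0 = fun ω => (P[fun ω' => (1 - Z ω') * D ω' | 𝓖]) ω / (1 - πs ω))
    (hμ1int : Integrable μ1 P) (hμ0int : Integrable μ0 P)
    (hν1int : Integrable ν1 P) (hν0int : Integrable ν0 P)
    (hZYint : Integrable (fun ω => Z ω * Y ω) P)
    (hZYint' : Integrable (fun ω => (1 - Z ω) * Y ω) P)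
    (hZDint : Integrable (fun ω => Z ω * D ω) P)
    (hZDint' : Integrable (fun ω => (1 - Z ω) * D ω) P)
    (hY1int : Integrable Y1 P) (hY0int : Integrable Y0 P) :
    ((∫ ω, ν1 ω ∂P) - (∫ ω, ν0 ω ∂P) = (P {ω | D0 ω < D1 ω}).toReal) ∧
    0 < (P {ω | D0 ω < D1 ω}).toReal ∧
    (∫ ω in {ω | D0 ω < D1 ω}, (Y1 ω - Y0 ω) ∂P) / (P {ω | D0 ω < D1 ω}).toReal =
      ((∫ ω, μ1 ω ∂P) - (∫ ω, μ0 ω ∂P)) / ((∫ ω, ν1 ω ∂P) - (∫ ω, ν0 ω ∂P)) :=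
  stmt_4_general (mΩ := mΩ) P Z D1 D0 Y1 Y0 hZmeas hD1meas hD0meas hY1meas hY0meas hZbin hD1bin
    hD0bin 𝓖 h𝓖le πs hπs hunconf hoverlap hmono hinstr D Y hD hY μ1 μ0 ν1 ν0 hμ1 hμ0 hν1 hν0 hY1int
    hY0int
end

section
/- If γ̂ minimizes the Lasso-penalized calibration objective L over ℝ^{1+p}, then the fitted inverse-probability weights over the instrumented group sum to the sample size: (1/n)·Σ_{i=1}^n Z_i/π̂_i = 1. -/
open Finset

/-!
Shifting the unpenalized intercept `γ₀` by `t` moves every linear score `γᵀfᵢ` by `t` and leaves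
the Lasso penalty unchanged, so at a minimizer the derivative in `t` of
`∑ᵢ Zᵢ e^{-(uᵢ + t)} + (1 - Zᵢ)(uᵢ + t)` vanishes at `t = 0`. This is the balancing equation
`∑ᵢ Zᵢ e^{-uᵢ} = ∑ᵢ (1 - Zᵢ)`, and since `Zᵢ / π̂ᵢ = Zᵢ (1 + e^{-uᵢ})` it gives `∑ᵢ Zᵢ / π̂ᵢ = n`.
-/

section CalibrationLoss

variable {ι : Type*} [Fintype ι]

noncomputable def calibrationLoss (Z u : ι → ℝ) (t : ℝ) : ℝ :=
  ∑ i, (Z i * Real.exp (-(u i + t)) + (1 - Z i) * (u i + t))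

lemma hasDerivAt_calibrationLoss (Z u : ι → ℝ) (t : ℝ) :
    HasDerivAt (calibrationLoss Z u) (∑ i, (1 - Z i - Z i * Real.exp (-(u i + t)))) t := by
  refine HasDerivAt.fun_sum fun i _ => ?_
  have hlin : HasDerivAt (fun s => u i + s) 1 t := (hasDerivAt_id t).const_add (u i)
  refine ((hlin.neg.exp.const_mul (Z i)).add (hlin.const_mul (1 - Z i))).congr_deriv ?_
  simp only [Pi.neg_apply]
  ring

lemma sum_mul_exp_eq_of_isLocalMin_calibrationLoss (Z u : ι → ℝ)
    (hmin : IsLocalMin (calibrationLoss Z u) 0) :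
    ∑ i, Z i * Real.exp (-u i) = ∑ i, (1 - Z i) := by
  have hcrit := hmin.hasDerivAt_eq_zero (hasDerivAt_calibrationLoss Z u 0)
  simp only [add_zero, sub_eq_add_neg, sum_add_distrib, sum_neg_distrib] at hcrit
  rw [sum_sub_distrib]
  linarith

lemma sum_div_sigmoid_eq_card (Z u : ι → ℝ)
    (hbal : ∑ i, Z i * Real.exp (-u i) = ∑ i, (1 - Z i)) :
    ∑ i, Z i / (1 / (1 + Real.exp (-u i))) = Fintype.card ι := by
  calc ∑ i, Z i / (1 / (1 + Real.exp (-u i)))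
      = ∑ i, Z i + ∑ i, Z i * Real.exp (-u i) := by
        rw [← sum_add_distrib]
        refine sum_congr rfl fun i _ => ?_
        rw [div_div_eq_mul_div, div_one, mul_one_add]
    _ = Fintype.card ι := by
        rw [hbal, ← sum_add_distrib]
        simp

end CalibrationLoss

lemma sum_add_single_mul {m : ℕ} (γ x : Fin (m + 1) → ℝ) (t : ℝ) :
    ∑ j, (γ + Pi.single 0 t : Fin (m + 1) → ℝ) j * x j = ∑ j, γ j * x j + t * x 0 := by
  simp [add_mul, sum_add_distrib, Pi.single_apply]

theorem stmt_5_general (n p : ℕ) (hn : 1 ≤ n)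
    (Z : Fin n → ℝ)
    (f : Fin n → Fin (p + 1) → ℝ) (hf0 : ∀ i, f i 0 = 1)
    (lam : ℝ)
    (L : (Fin (p + 1) → ℝ) → ℝ)
    (hL : ∀ γ, L γ = (1 / (n : ℝ)) * ∑ i, (Z i * Real.exp (-(∑ j, γ j * f i j))
          + (1 - Z i) * (∑ j, γ j * f i j))
        + lam * ∑ j : Fin p, |γ j.succ|)
    (γhat : Fin (p + 1) → ℝ) (hmin : ∀ γ, L γhat ≤ L γ)
    (πhat : Fin n → ℝ)
    (hπ : ∀ i, πhat i = 1 / (1 + Real.exp (-(∑ j, γhat j * f i j)))) :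
    (1 / (n : ℝ)) * ∑ i, Z i / πhat i = 1 := by
  set u : Fin n → ℝ := fun i => ∑ j, γhat j * f i j
  have hnpos : (0 : ℝ) < n := by exact_mod_cast hn
  have hshift : ∀ t, L (γhat + Pi.single 0 t) =
      (1 / (n : ℝ)) * calibrationLoss Z u t + lam * ∑ j : Fin p, |γhat j.succ| := fun t => by
    simp only [hL, sum_add_single_mul, hf0, mul_one]
    simp only [Pi.add_apply, Pi.single_eq_of_ne (Fin.succ_ne_zero _), add_zero, u,
      calibrationLoss]
  have hlocal : IsLocalMin (calibrationLoss Z u) 0 := by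
    refine Filter.Eventually.of_forall fun t => ?_
    have hγhat := hshift 0
    rw [Pi.single_zero, add_zero] at hγhat
    have hle := hmin (γhat + Pi.single 0 t)
    rw [hγhat, hshift t, add_le_add_iff_right] at hle
    exact le_of_mul_le_mul_left hle (by positivity)
  rw [funext hπ, sum_div_sigmoid_eq_card Z u (sum_mul_exp_eq_of_isLocalMin_calibrationLoss Z u hlocal),
    Fintype.card_fin]
  field_simp

/-- If `γ̂` minimizes the Lasso-penalized calibration objective, the fitted
inverse-probability weights over the instrumented group sum to the sample size. -/
theorem stmt_5 (n p : ℕ) (hn : 1 ≤ n) (hp : 1 ≤ p)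
    (Z : Fin n → ℝ) (hZ : ∀ i, Z i = 0 ∨ Z i = 1)
    (f : Fin n → Fin (p + 1) → ℝ) (hf0 : ∀ i, f i 0 = 1)
    (lam : ℝ) (hlam : 0 ≤ lam)
    (L : (Fin (p + 1) → ℝ) → ℝ)
    (hL : ∀ γ, L γ = (1 / (n : ℝ)) * ∑ i, (Z i * Real.exp (-(∑ j, γ j * f i j))
          + (1 - Z i) * (∑ j, γ j * f i j))
        + lam * ∑ j : Fin p, |γ j.succ|)
    (γhat : Fin (p + 1) → ℝ) (hmin : ∀ γ, L γhat ≤ L γ)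
    (πhat : Fin n → ℝ)
    (hπ : ∀ i, πhat i = 1 / (1 + Real.exp (-(∑ j, γhat j * f i j)))) :
    (1 / (n : ℝ)) * ∑ i, Z i / πhat i = 1 :=
  stmt_5_general n p hn Z f hf0 lam L hL γhat hmin πhat hπ
end

section
/- If α̂ minimizes the penalized weighted-likelihood objective F over ℝ^{1+q₁}, then: (i) the weighted residuals vanish, (1/n)·Σ_{i=1}^n Z_i·((1−π̂_i)/π̂_i)·(D_i − m̂_i) = 0; (ii) consequently the augmented inverse-probability-weighted average simplifies, (1/n)·Σ_{i=1}^n [ m̂_i + (Z_i/π̂_i)·(D_i − m̂_i) ] = (1/n)·Σ_{i=1}^n [ Z_i·D_i + (1−Z_i)·m̂_i ]; and (iii) if in addition 0 ≤ D_i ≤ 1 and 0 ≤ m̂_i ≤ 1 for all i, then this common value lies in the interval [0, 1]. -/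
/-!
Shifting the unpenalized intercept by `t` moves every linear index `αᵀgᵢ` by `t` (since
`gᵢ₀ = 1`) and leaves the ℓ¹ penalty unchanged, so `t ↦ F(α̂ + t e₀)` is differentiable with
a minimum at `0`. Its derivative there is `(1/n) Σ Zᵢwᵢ(m̂ᵢ - Dᵢ)`, which gives (i). Each
augmented IPW summand equals `ZᵢDᵢ + (1 - Zᵢ)m̂ᵢ` plus the `i`-th weighted residual, so (ii)
follows from (i), and (iii) holds because each `ZᵢDᵢ + (1 - Zᵢ)m̂ᵢ` is a convex combination
of numbers in `[0, 1]`.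
-/

open Finset

theorem hasDerivAt_sum_mul_loss_shift {ι : Type*} [Fintype ι] {Ψ ψ : ℝ → ℝ}
    (hΨ : ∀ x, HasDerivAt Ψ (ψ x) x) (c D s : ι → ℝ) (t : ℝ) :
    HasDerivAt (fun u => ∑ i, c i * (-(D i) * (s i + u) + Ψ (s i + u)))
      (∑ i, c i * (ψ (s i + t) - D i)) t := by
  refine HasDerivAt.fun_sum fun i _ => ?_
  have hshift : HasDerivAt (fun u : ℝ => s i + u) 1 t := (hasDerivAt_id t).const_add (s i)
  exact (((hshift.const_mul (-(D i))).add ((hΨ (s i + t)).comp t hshift)).const_mul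
    (c i)).congr_deriv (by ring)

theorem sum_add_smul_single_mul {ι R : Type*} [Fintype ι] [DecidableEq ι] [CommSemiring R]
    (α b : ι → R) (k : ι) (t : R) :
    ∑ j, (α + t • Pi.single k 1 : ι → R) j * b j = ∑ j, α j * b j + t * b k := by
  simp [add_mul, sum_add_distrib, Pi.single_apply]

theorem aipw_summand_eq (z d m p : ℝ) (hp : p ≠ 0) :
    m + z / p * (d - m) = (z * d + (1 - z) * m) + z * ((1 - p) / p) * (d - m) := by
  field_simp
  ring

theorem mem_Icc_mul_add_one_sub_mul {a b z d m : ℝ} (hz : z ∈ Set.Icc (0 : ℝ) 1)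
    (hd : d ∈ Set.Icc a b) (hm : m ∈ Set.Icc a b) :
    z * d + (1 - z) * m ∈ Set.Icc a b :=
  convex_Icc a b hd hm hz.1 (sub_nonneg.2 hz.2) (by ring)

theorem one_div_card_mul_sum_mem_Icc {n : ℕ} {x : Fin n → ℝ}
    (hx : ∀ i, x i ∈ Set.Icc (0 : ℝ) 1) :
    (1 / (n : ℝ)) * ∑ i, x i ∈ Set.Icc (0 : ℝ) 1 := by
  have hsum_le : ∑ i, x i ≤ n := by
    simpa using sum_le_sum fun i (_ : i ∈ univ) => (hx i).2
  refine ⟨mul_nonneg (by positivity) (sum_nonneg fun i _ => (hx i).1), ?_⟩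
  rcases n.eq_zero_or_pos with rfl | hn
  · simp
  · rw [one_div, inv_mul_le_one₀ (by positivity)]
    exact hsum_le

theorem stmt_7_general (n q1 : ℕ)
    (Z D : Fin n → ℝ) (hZ : ∀ i, Z i = 0 ∨ Z i = 1)
    (πhat : Fin n → ℝ) (hπ : ∀ i, 0 < πhat i ∧ πhat i < 1)
    (g : Fin n → Fin (q1 + 1) → ℝ) (hg0 : ∀ i, g i 0 = 1)
    (Ψ ψ : ℝ → ℝ) (hΨ : ∀ x, HasDerivAt Ψ (ψ x) x)
    (lam : ℝ)
    (w : Fin n → ℝ) (hw : ∀ i, w i = (1 - πhat i) / πhat i)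
    (F : (Fin (q1 + 1) → ℝ) → ℝ)
    (hF : ∀ α, F α = (1 / (n : ℝ)) * ∑ i, Z i * w i *
          (-(D i) * (∑ j, α j * g i j) + Ψ (∑ j, α j * g i j))
        + lam * ∑ j : Fin q1, |α j.succ|)
    (αhat : Fin (q1 + 1) → ℝ) (hmin : ∀ α, F αhat ≤ F α)
    (mhat : Fin n → ℝ) (hm : ∀ i, mhat i = ψ (∑ j, αhat j * g i j)) :
    ((1 / (n : ℝ)) * ∑ i, Z i * ((1 - πhat i) / πhat i) * (D i - mhat i) = 0) ∧
    ((1 / (n : ℝ)) * ∑ i, (mhat i + (Z i / πhat i) * (D i - mhat i))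
        = (1 / (n : ℝ)) * ∑ i, (Z i * D i + (1 - Z i) * mhat i)) ∧
    ((∀ i, 0 ≤ D i ∧ D i ≤ 1) → (∀ i, 0 ≤ mhat i ∧ mhat i ≤ 1) →
      0 ≤ (1 / (n : ℝ)) * ∑ i, (Z i * D i + (1 - Z i) * mhat i) ∧
      (1 / (n : ℝ)) * ∑ i, (Z i * D i + (1 - Z i) * mhat i) ≤ 1) := by
  set s : Fin n → ℝ := fun i => ∑ j, αhat j * g i j
  set shift : ℝ → Fin (q1 + 1) → ℝ := fun t => αhat + t • Pi.single 0 1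
  have hF_shift : ∀ t, F (shift t) = (1 / (n : ℝ)) * ∑ i, Z i * w i *
      (-(D i) * (s i + t) + Ψ (s i + t)) + lam * ∑ j : Fin q1, |αhat j.succ| := by
    intro t
    simp only [shift, s, hF, sum_add_smul_single_mul, hg0, mul_one]
    simp [Fin.succ_ne_zero]
  have hderiv : HasDerivAt (fun t => F (shift t))
      ((1 / (n : ℝ)) * ∑ i, Z i * w i * (ψ (s i + 0) - D i)) 0 := by
    simpa only [funext hF_shift] using
      ((hasDerivAt_sum_mul_loss_shift hΨ _ D s 0).const_mul _).add_const _
  have hmin_shift : IsLocalMin (fun t => F (shift t)) 0 :=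
    Filter.Eventually.of_forall fun t => by simpa [shift] using hmin (shift t)
  have residual : (1 / (n : ℝ)) * ∑ i, Z i * ((1 - πhat i) / πhat i) * (D i - mhat i) = 0 := by
    have := hmin_shift.hasDerivAt_eq_zero hderiv
    simp only [add_zero, ← hw, hm, s] at this ⊢
    simpa only [← neg_sub (ψ _), mul_neg, sum_neg_distrib, neg_eq_zero] using this
  refine ⟨residual, ?_, fun hD hmhat => one_div_card_mul_sum_mem_Icc fun i =>
    mem_Icc_mul_add_one_sub_mul ?_ (hD i) (hmhat i)⟩
  · simp only [aipw_summand_eq _ _ _ _ (hπ _).1.ne', sum_add_distrib, mul_add, residual, add_zero]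
  · rcases hZ i with h | h <;> simp [h]

/-- KKT consequences of minimizing the penalized weighted-likelihood objective for
the treatment regression: vanishing weighted residuals, simplification of the
augmented IPW average, and boundedness in `[0,1]`. -/
theorem stmt_7 (n q1 : ℕ) (hn : 1 ≤ n) (hq1 : 1 ≤ q1)
    (Z D : Fin n → ℝ) (hZ : ∀ i, Z i = 0 ∨ Z i = 1)
    (πhat : Fin n → ℝ) (hπ : ∀ i, 0 < πhat i ∧ πhat i < 1)
    (g : Fin n → Fin (q1 + 1) → ℝ) (hg0 : ∀ i, g i 0 = 1)
    (Ψ ψ : ℝ → ℝ) (hΨ : ∀ x, HasDerivAt Ψ (ψ x) x)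
    (lam : ℝ) (hlam : 0 ≤ lam)
    (w : Fin n → ℝ) (hw : ∀ i, w i = (1 - πhat i) / πhat i)
    (F : (Fin (q1 + 1) → ℝ) → ℝ)
    (hF : ∀ α, F α = (1 / (n : ℝ)) * ∑ i, Z i * w i *
          (-(D i) * (∑ j, α j * g i j) + Ψ (∑ j, α j * g i j))
        + lam * ∑ j : Fin q1, |α j.succ|)
    (αhat : Fin (q1 + 1) → ℝ) (hmin : ∀ α, F αhat ≤ F α)
    (mhat : Fin n → ℝ) (hm : ∀ i, mhat i = ψ (∑ j, αhat j * g i j)) :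
    ((1 / (n : ℝ)) * ∑ i, Z i * ((1 - πhat i) / πhat i) * (D i - mhat i) = 0) ∧
    ((1 / (n : ℝ)) * ∑ i, (mhat i + (Z i / πhat i) * (D i - mhat i))
        = (1 / (n : ℝ)) * ∑ i, (Z i * D i + (1 - Z i) * mhat i)) ∧
    ((∀ i, 0 ≤ D i ∧ D i ≤ 1) → (∀ i, 0 ≤ mhat i ∧ mhat i ≤ 1) →
      0 ≤ (1 / (n : ℝ)) * ∑ i, (Z i * D i + (1 - Z i) * mhat i) ∧
      (1 / (n : ℝ)) * ∑ i, (Z i * D i + (1 - Z i) * mhat i) ≤ 1) :=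
  stmt_7_general n q1 Z D hZ πhat hπ g hg0 Ψ ψ hΨ lam w hw F hF αhat hmin mhat hm
end

section
/- If α̂₁₁ minimizes the penalized weighted-likelihood objective F₁₁ over ℝ^{1+q₂}, then: (i) the weighted product residuals vanish, (1/n)·Σ_{i=1}^n Z_i·((1−π̂_i)/π̂_i)·(D_i·Y_i − m̂_i·m̂₁₁,_i) = 0; (ii) consequently the augmented inverse-probability-weighted average simplifies, (1/n)·Σ_{i=1}^n [ m̂_i·m̂₁₁,_i + (Z_i/π̂_i)·(D_i·Y_i − m̂_i·m̂₁₁,_i) ] = (1/n)·Σ_{i=1}^n [ Z_i·D_i·Y_i + (1−Z_i)·m̂_i·m̂₁₁,_i ]; and (iii) this common value lies between min_i c_i and max_i c_i, where c_i = D_i·Y_i if Z_i = 1 and c_i = m̂_i·m̂₁₁,_i if Z_i = 0. -/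
open Finset

/-!
Moving only the unpenalized intercept coordinate `α₀` changes every linear score `αᵀhᵢ` by the
same amount and leaves the `ℓ¹` penalty untouched, so `t ↦ F₁₁(α̂₁₁ + t e₀)` is a differentiable
function with a minimum at `0`. Its derivative there is, up to sign, the weighted product
residual of (i). Part (ii) is then the termwise identity `Z/π = Z + Z (1 - π)/π`, and the
right-hand side of (ii) is the mean of the `cᵢ`, which lies between their minimum and maximum.
-/

theorem add_smul_single_dotProduct {κ : Type*} [Fintype κ] [DecidableEq κ]
    (α v : κ → ℝ) (k : κ) (t : ℝ) :
    (α + t • Pi.single k 1) ⬝ᵥ v = t * v k + α ⬝ᵥ v := by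
  rw [add_dotProduct, smul_dotProduct, single_dotProduct, smul_eq_mul, one_mul, add_comm]

theorem sum_deriv_eq_zero_of_isMinOn_of_intercept {ι κ : Type*} [Fintype ι] [Fintype κ]
    [DecidableEq κ] (ℓ ℓ' : ι → ℝ → ℝ) (hℓ : ∀ i x, HasDerivAt (ℓ i) (ℓ' i x) x)
    (h : ι → κ → ℝ) (k : κ) (hk : ∀ i, h i k = 1)
    (P : (κ → ℝ) → ℝ) (hP : ∀ α (t : ℝ), P (α + t • Pi.single k 1) = P α) (α : κ → ℝ)
    (hmin : IsMinOn (fun β => ∑ i, ℓ i (β ⬝ᵥ h i) + P β) Set.univ α) :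
    ∑ i, ℓ' i (α ⬝ᵥ h i) = 0 := by
  set g : ℝ → ℝ := fun t => ∑ i, ℓ i (t + α ⬝ᵥ h i)
  have hline : ∀ t, g t + P α = ∑ i, ℓ i ((α + t • Pi.single k 1) ⬝ᵥ h i)
      + P (α + t • Pi.single k 1) := by
    intro t
    simp only [g, add_smul_single_dotProduct, hk, mul_one, hP]
  have hg_min : IsLocalMin g 0 := Filter.Eventually.of_forall fun t => by
    have := isMinOn_univ_iff.mp hmin (α + t • Pi.single k 1)
    rw [← hline] at this
    simpa [g] using this
  have hg_deriv : HasDerivAt g (∑ i, ℓ' i (α ⬝ᵥ h i)) 0 :=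
    HasDerivAt.fun_sum fun i _ =>
      HasDerivAt.comp_add_const 0 _ (by simpa using hℓ i (α ⬝ᵥ h i))
  exact hg_min.hasDerivAt_eq_zero hg_deriv

theorem mul_add_one_sub_mul_eq_ite {z : ℝ} (hz : z = 0 ∨ z = 1) (a b : ℝ) :
    z * a + (1 - z) * b = if z = 1 then a else b := by
  rcases hz with rfl | rfl <;> norm_num

theorem mul_sum_aipw_eq {ι : Type*} [Fintype ι] (r : ℝ) (z π a b : ι → ℝ)
    (hπ : ∀ i, π i ≠ 0) :
    r * ∑ i, (b i + z i / π i * (a i - b i))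
      = r * ∑ i, (z i * a i + (1 - z i) * b i)
        + r * ∑ i, z i * ((1 - π i) / π i) * (a i - b i) := by
  rw [← mul_add, ← sum_add_distrib]
  congr 1
  refine sum_congr rfl fun i _ => ?_
  field_simp [hπ i]
  ring

theorem ciInf_le_mean {ι : Type*} [Fintype ι] [Nonempty ι] (c : ι → ℝ) :
    (⨅ i, c i) ≤ (1 / (Fintype.card ι : ℝ)) * ∑ i, c i := by
  have hcard : (0 : ℝ) < Fintype.card ι := by exact_mod_cast Fintype.card_pos
  have hsum : (Fintype.card ι : ℝ) * (⨅ i, c i) ≤ ∑ i, c i := by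
    simpa using card_nsmul_le_sum univ c _ fun i _ => ciInf_le (Finite.bddBelow_range c) i
  rw [one_div, inv_mul_eq_div, le_div_iff₀ hcard]
  linarith

theorem mean_le_ciSup {ι : Type*} [Fintype ι] [Nonempty ι] (c : ι → ℝ) :
    (1 / (Fintype.card ι : ℝ)) * ∑ i, c i ≤ ⨆ i, c i := by
  have hcard : (0 : ℝ) < Fintype.card ι := by exact_mod_cast Fintype.card_pos
  have hsum : ∑ i, c i ≤ (Fintype.card ι : ℝ) * (⨆ i, c i) := by
    simpa using sum_le_card_nsmul univ c _ fun i _ => le_ciSup (Finite.bddAbove_range c) i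
  rw [one_div, inv_mul_eq_div, div_le_iff₀ hcard]
  linarith

theorem stmt_8_general (n q2 : ℕ) (hn : 1 ≤ n)
    (Z D Y : Fin n → ℝ) (hZ : ∀ i, Z i = 0 ∨ Z i = 1)
    (πhat : Fin n → ℝ) (hπ : ∀ i, 0 < πhat i ∧ πhat i < 1)
    (mhat : Fin n → ℝ)
    (h : Fin n → Fin (q2 + 1) → ℝ) (hh0 : ∀ i, h i 0 = 1)
    (Ψ ψ : ℝ → ℝ) (hΨ : ∀ x, HasDerivAt Ψ (ψ x) x)
    (lam : ℝ)
    (w : Fin n → ℝ) (hw : ∀ i, w i = (1 - πhat i) / πhat i)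
    (F : (Fin (q2 + 1) → ℝ) → ℝ)
    (hF : ∀ α, F α = (1 / (n : ℝ)) * ∑ i, Z i * w i *
          (-(D i * Y i) * (∑ j, α j * h i j) + mhat i * Ψ (∑ j, α j * h i j))
        + lam * ∑ j : Fin q2, |α j.succ|)
    (αhat : Fin (q2 + 1) → ℝ) (hmin : ∀ α, F αhat ≤ F α)
    (m11 : Fin n → ℝ) (hm11 : ∀ i, m11 i = ψ (∑ j, αhat j * h i j))
    (c : Fin n → ℝ)
    (hc : ∀ i, c i = if Z i = 1 then D i * Y i else mhat i * m11 i) :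
    ((1 / (n : ℝ)) * ∑ i, Z i * ((1 - πhat i) / πhat i)
        * (D i * Y i - mhat i * m11 i) = 0) ∧
    ((1 / (n : ℝ)) * ∑ i, (mhat i * m11 i
          + (Z i / πhat i) * (D i * Y i - mhat i * m11 i))
        = (1 / (n : ℝ)) * ∑ i, (Z i * (D i * Y i) + (1 - Z i) * (mhat i * m11 i))) ∧
    ((⨅ i, c i) ≤ (1 / (n : ℝ)) * ∑ i, (Z i * (D i * Y i) + (1 - Z i) * (mhat i * m11 i)) ∧
      (1 / (n : ℝ)) * ∑ i, (Z i * (D i * Y i) + (1 - Z i) * (mhat i * m11 i)) ≤ ⨆ i, c i) := by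
  have hscore := sum_deriv_eq_zero_of_isMinOn_of_intercept
    (fun i x => 1 / (n : ℝ) * (Z i * w i * (-(D i * Y i) * x + mhat i * Ψ x)))
    (fun i x => 1 / (n : ℝ) * (Z i * w i * (-(D i * Y i) * 1 + mhat i * ψ x)))
    (fun i x =>
      ((((hasDerivAt_id x).const_mul _).add ((hΨ x).const_mul _)).const_mul _).const_mul _)
    h 0 hh0 (fun α => lam * ∑ j : Fin q2, |α j.succ|)
    (fun α t => by simp [Fin.succ_ne_zero]) αhat
    (isMinOn_univ_iff.mpr fun β => by
      simpa only [hF, mul_sum univ _ (1 / (n : ℝ)), dotProduct] using hmin β)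
  have hresidual : (1 / (n : ℝ)) * ∑ i, Z i * ((1 - πhat i) / πhat i)
      * (D i * Y i - mhat i * m11 i) = 0 := by
    rw [← neg_eq_zero, ← hscore, mul_sum, ← sum_neg_distrib]
    refine sum_congr rfl fun i _ => ?_
    rw [hw, hm11, dotProduct]
    ring
  have hmean_c : ∑ i, (Z i * (D i * Y i) + (1 - Z i) * (mhat i * m11 i)) = ∑ i, c i :=
    sum_congr rfl fun i _ => by rw [hc, mul_add_one_sub_mul_eq_ite (hZ i)]
  have : Nonempty (Fin n) := ⟨⟨0, hn⟩⟩
  refine ⟨hresidual, ?_, ?_, ?_⟩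
  · rw [mul_sum_aipw_eq _ Z πhat _ _ fun i => (hπ i).1.ne', hresidual, add_zero]
  · simpa [hmean_c] using ciInf_le_mean c
  · simpa [hmean_c] using mean_le_ciSup c

/-- KKT consequences of minimizing the penalized weighted-likelihood objective for
the outcome regression: vanishing weighted product residuals, simplification of the
augmented IPW average, and boundedness between the extreme values `c_i`. -/
theorem stmt_8 (n q2 : ℕ) (hn : 1 ≤ n) (hq2 : 1 ≤ q2)
    (Z D Y : Fin n → ℝ) (hZ : ∀ i, Z i = 0 ∨ Z i = 1)
    (πhat : Fin n → ℝ) (hπ : ∀ i, 0 < πhat i ∧ πhat i < 1)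
    (mhat : Fin n → ℝ)
    (h : Fin n → Fin (q2 + 1) → ℝ) (hh0 : ∀ i, h i 0 = 1)
    (Ψ ψ : ℝ → ℝ) (hΨ : ∀ x, HasDerivAt Ψ (ψ x) x)
    (lam : ℝ) (hlam : 0 ≤ lam)
    (w : Fin n → ℝ) (hw : ∀ i, w i = (1 - πhat i) / πhat i)
    (F : (Fin (q2 + 1) → ℝ) → ℝ)
    (hF : ∀ α, F α = (1 / (n : ℝ)) * ∑ i, Z i * w i *
          (-(D i * Y i) * (∑ j, α j * h i j) + mhat i * Ψ (∑ j, α j * h i j))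
        + lam * ∑ j : Fin q2, |α j.succ|)
    (αhat : Fin (q2 + 1) → ℝ) (hmin : ∀ α, F αhat ≤ F α)
    (m11 : Fin n → ℝ) (hm11 : ∀ i, m11 i = ψ (∑ j, αhat j * h i j))
    (c : Fin n → ℝ)
    (hc : ∀ i, c i = if Z i = 1 then D i * Y i else mhat i * m11 i) :
    ((1 / (n : ℝ)) * ∑ i, Z i * ((1 - πhat i) / πhat i)
        * (D i * Y i - mhat i * m11 i) = 0) ∧
    ((1 / (n : ℝ)) * ∑ i, (mhat i * m11 i
          + (Z i / πhat i) * (D i * Y i - mhat i * m11 i))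
        = (1 / (n : ℝ)) * ∑ i, (Z i * (D i * Y i) + (1 - Z i) * (mhat i * m11 i))) ∧
    ((⨅ i, c i) ≤ (1 / (n : ℝ)) * ∑ i, (Z i * (D i * Y i) + (1 - Z i) * (mhat i * m11 i)) ∧
      (1 / (n : ℝ)) * ∑ i, (Z i * (D i * Y i) + (1 - Z i) * (mhat i * m11 i)) ≤ ⨆ i, c i) :=
  stmt_8_general n q2 hn Z D Y hZ πhat hπ mhat h hh0 Ψ ψ hΨ lam w hw F hF αhat hmin m11 hm11 c hc
end

section
/- Let ψ : ℝ → ℝ be differentiable with ψ′ ≥ 0, suppose there is C > 0 such that ψ′(u) ≤ ψ′(ũ)·exp(C·|u−ũ|) for all u, ũ ∈ ℝ, and suppose ψ(u) → 0 as u → −∞. Then ψ′(η) ≤ C·ψ(η) for every η ∈ ℝ. -/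
/-- If `ψ` is differentiable with nonnegative derivative satisfying
`ψ′(u) ≤ ψ′(ũ)·exp(C·|u−ũ|)` and `ψ(u) → 0` as `u → −∞`, then `ψ′(η) ≤ C·ψ(η)`. -/
theorem stmt_9 (ψ ψ' : ℝ → ℝ) (hderiv : ∀ x, HasDerivAt ψ (ψ' x) x)
    (hnonneg : ∀ x, 0 ≤ ψ' x) (C : ℝ) (hC : 0 < C)
    (hratio : ∀ u v : ℝ, ψ' u ≤ ψ' v * Real.exp (C * |u - v|))
    (hlim : Filter.Tendsto ψ Filter.atBot (nhds 0)) :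
    ∀ η : ℝ, ψ' η ≤ C * ψ η := by
  intro η
  set h : ℝ → ℝ := fun x => ψ x - ψ' η / C * Real.exp (C * (x - η)) with hh
  have hd : ∀ x, HasDerivAt h (ψ' x - ψ' η * Real.exp (C * (x - η))) x := by
    intro x
    have e1 : HasDerivAt (fun x : ℝ => C * (x - η)) C x := by
      simpa using ((hasDerivAt_id x).sub_const η).const_mul C
    have e2 : HasDerivAt (fun x => Real.exp (C * (x - η))) (Real.exp (C * (x - η)) * C) x :=
      (Real.hasDerivAt_exp _).comp x e1
    have e3 := (hderiv x).sub (e2.const_mul (ψ' η / C))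
    have : ψ' η / C * (Real.exp (C * (x - η)) * C) = ψ' η * Real.exp (C * (x - η)) := by
      field_simp
    rw [this] at e3
    exact e3
  -- derivative of h nonneg on Iic η
  have hd_nonneg : ∀ x ∈ Set.Iic η, 0 ≤ ψ' x - ψ' η * Real.exp (C * (x - η)) := by
    intro x hx
    have := hratio η x
    have habs : |η - x| = η - x := abs_of_nonneg (by linarith [Set.mem_Iic.mp hx])
    rw [habs] at this
    have hexp : ψ' η * Real.exp (C * (x - η)) ≤ ψ' x := by
      have hpos : (0:ℝ) < Real.exp (C * (η - x)) := Real.exp_pos _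
      rw [show C * (x - η) = -(C * (η - x)) by ring, Real.exp_neg]
      rw [mul_inv_le_iff₀ hpos]
      exact this
    linarith
  have hmono : MonotoneOn h (Set.Iic η) := by
    apply monotoneOn_of_deriv_nonneg (convex_Iic η)
    · exact Continuous.continuousOn
        (continuous_iff_continuousAt.mpr fun x => (hd x).differentiableAt.continuousAt)
    · intro x _
      exact (hd x).differentiableAt.differentiableWithinAt
    · intro x hx
      rw [(hd x).deriv]
      exact hd_nonneg x (interior_subset hx)
  -- h tends to 0 at atBot
  have hlim2 : Filter.Tendsto h Filter.atBot (nhds 0) := by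
    have h2 : Filter.Tendsto (fun x => ψ' η / C * Real.exp (C * (x - η))) Filter.atBot (nhds 0) := by
      have h1 : Filter.Tendsto (fun x : ℝ => C * (x - η)) Filter.atBot Filter.atBot :=
        (Filter.tendsto_atBot_add_const_right _ (-η) Filter.tendsto_id).const_mul_atBot hC
      have h2 := (Real.tendsto_exp_atBot).comp h1
      simpa using h2.const_mul (ψ' η / C)
    simpa using hlim.sub h2
  have key : (0:ℝ) ≤ h η := by
    apply le_of_tendsto hlim2
    filter_upwards [Filter.eventually_le_atBot η] with x hx
    exact hmono (Set.mem_Iic.mpr hx) (Set.mem_Iic.mpr le_rfl) hx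
  have : ψ' η / C ≤ ψ η := by
    have := key
    simp only [hh, sub_self, mul_zero, Real.exp_zero, mul_one] at this
    linarith
  calc ψ' η = C * (ψ' η / C) := by field_simp
    _ ≤ C * ψ η := by exact mul_le_mul_of_nonneg_left this hC.le
end

section
/- Let ψ : ℝ → ℝ be differentiable with ψ′ ≥ 0 and ψ′(u) ≤ ψ′(ũ)·exp(C₂·|u−ũ|) for all u, ũ ∈ ℝ, where C₂ > 0. Let m ≥ 1 and a, b, g ∈ ℝ^m with max_j |g_j| ≤ C₀ and |bᵀg| ≤ C₁, where C₀, C₁ > 0. Then |ψ(aᵀg) − ψ(bᵀg)| ≤ |(a−b)ᵀg| · ψ′(0) · exp( C₂·( C₁ + C₀·‖a−b‖₁ ) ), where ‖·‖₁ is the ℓ₁ norm. -/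
open Finset

lemma mvt_aux (ψ ψ' : ℝ → ℝ) (hderiv : ∀ x, HasDerivAt ψ (ψ' x) x)
    (x y : ℝ) : ∃ c : ℝ, |c - y| ≤ |x - y| ∧ ψ x - ψ y = ψ' c * (x - y) := by
  rcases lt_trichotomy x y with h | h | h
  · obtain ⟨c, hc, hc2⟩ := exists_hasDerivAt_eq_slope ψ ψ' h
      (fun z _ => (hderiv z).continuousAt.continuousWithinAt)
      (fun z _ => hderiv z)
    refine ⟨c, ?_, ?_⟩
    · rw [abs_sub_comm c y, abs_of_pos (by linarith [hc.1, hc.2] : 0 < y - c),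
        abs_sub_comm x y, abs_of_pos (by linarith : 0 < y - x)]
      linarith [hc.1]
    · rw [hc2]
      have hne : y - x ≠ 0 := by linarith
      field_simp
      ring
  · simp [h]
    exact ⟨y, by simp⟩
  · obtain ⟨c, hc, hc2⟩ := exists_hasDerivAt_eq_slope ψ ψ' h
      (fun z _ => (hderiv z).continuousAt.continuousWithinAt)
      (fun z _ => hderiv z)
    refine ⟨c, ?_, ?_⟩
    · rw [abs_of_pos (by linarith [hc.1, hc.2] : 0 < c - y),
        abs_of_pos (by linarith : 0 < x - y)]
      linarith [hc.2]
    · rw [hc2]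
      have hne : x - y ≠ 0 := by linarith
      field_simp

/-- Lipschitz-type bound for `ψ` along linear predictors. -/
theorem stmt_10 (ψ ψ' : ℝ → ℝ) (hderiv : ∀ x, HasDerivAt ψ (ψ' x) x)
    (hnonneg : ∀ x, 0 ≤ ψ' x) (C2 : ℝ) (hC2 : 0 < C2)
    (hratio : ∀ u v : ℝ, ψ' u ≤ ψ' v * Real.exp (C2 * |u - v|))
    (m : ℕ) (hm : 1 ≤ m) (a b g : Fin m → ℝ)
    (C0 C1 : ℝ) (hC0 : 0 < C0) (hC1 : 0 < C1)
    (hg : ∀ j, |g j| ≤ C0) (hbg : |∑ j, b j * g j| ≤ C1) :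
    |ψ (∑ j, a j * g j) - ψ (∑ j, b j * g j)| ≤
      |∑ j, (a j - b j) * g j| * ψ' 0 *
        Real.exp (C2 * (C1 + C0 * ∑ j, |a j - b j|)) := by
  set x := ∑ j, a j * g j with hx
  set y := ∑ j, b j * g j with hy
  have hd : (∑ j, (a j - b j) * g j) = x - y := by
    rw [hx, hy, ← Finset.sum_sub_distrib]
    exact Finset.sum_congr rfl (fun j _ => by ring)
  obtain ⟨c, hc1, hc2⟩ := mvt_aux ψ ψ' hderiv x y
  have hxy : |x - y| ≤ C0 * ∑ j, |a j - b j| := by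
    rw [← hd]
    calc |∑ j, (a j - b j) * g j| ≤ ∑ j, |(a j - b j) * g j| :=
          Finset.abs_sum_le_sum_abs _ _
      _ ≤ ∑ j, |a j - b j| * C0 := by
          refine Finset.sum_le_sum fun j _ => ?_
          rw [abs_mul]
          exact mul_le_mul_of_nonneg_left (hg j) (abs_nonneg _)
      _ = C0 * ∑ j, |a j - b j| := by rw [← Finset.sum_mul]; ring
  have hcb : |c| ≤ C1 + C0 * ∑ j, |a j - b j| := by
    calc |c| ≤ |c - y| + |y| := by
          have := abs_sub_abs_le_abs_sub c y; linarith [abs_sub_abs_le_abs_sub c y,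
            (abs_sub c y)]
      _ ≤ |x - y| + C1 := by linarith
      _ ≤ C1 + C0 * ∑ j, |a j - b j| := by linarith
  have hψc : ψ' c ≤ ψ' 0 * Real.exp (C2 * (C1 + C0 * ∑ j, |a j - b j|)) := by
    calc ψ' c ≤ ψ' 0 * Real.exp (C2 * |c - 0|) := hratio c 0
      _ ≤ ψ' 0 * Real.exp (C2 * (C1 + C0 * ∑ j, |a j - b j|)) := by
          apply mul_le_mul_of_nonneg_left _ (hnonneg 0)
          apply Real.exp_le_exp.mpr
          apply mul_le_mul_of_nonneg_left _ hC2.le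
          simpa using hcb
  rw [hc2, hd, abs_mul, abs_of_nonneg (hnonneg c)]
  calc ψ' c * |x - y| ≤ (ψ' 0 * Real.exp (C2 * (C1 + C0 * ∑ j, |a j - b j|))) * |x - y| :=
        mul_le_mul_of_nonneg_right hψc (abs_nonneg _)
    _ = |x - y| * ψ' 0 * Real.exp (C2 * (C1 + C0 * ∑ j, |a j - b j|)) := by ring
end

section
/- Control of the data-dependent weights and mean function in the gradient (Lemma 7 of the paper): under the listed hypotheses, with b = α̂₁₁ − ᾱ₁₁ and Q = Ẽ[ Z·w(γ̄)·(bᵀh)² ], one has bᵀ·Ẽ[ Z·w(γ̂)·( D·Y − ψ_D(α̂₁ᵀg)·ψ_Y(ᾱ₁₁ᵀh) )·h ] ≤ bᵀ·Ẽ[ Z·w(γ̄)·( D·Y − ψ_D(ᾱ₁ᵀg)·ψ_Y(ᾱ₁₁ᵀh) )·h ] + [ (M₀₁·s_γ·λ₀²)^{1/2} + M₁₁^{1/2}·( s_γ·λ₀² + s_α·λ₁² )^{1/2} ]·Q^{1/2}, where M₀₁ = exp(2·C_{f0}·M₀·ϱ₀)·[ σ²·M₀ + ( B_{f2} + σ²·B_{f1}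 )·M₀²·ϱ₀ ] and M₁₁ = ψ_D′(0)²·C̃_{h1}²·exp( 2·C_{f0}·M₀·ϱ₀ + 2·C_{g2}·( C_{g1} + C_{g0}·M₁·ϱ₁ ) )·M₁ with C̃_{h1} = max( |ψ_Y(−C_{h1})|, |ψ_Y(C_{h1})| ). -/
open Finset

private lemma exp_sub_one_abs (x : ℝ) : |Real.exp x - 1| ≤ |x| * Real.exp |x| := by
  rcases le_or_gt 0 x with hx | hx
  · rw [abs_of_nonneg hx, abs_of_nonneg (by nlinarith [Real.add_one_le_exp x] : (0:ℝ) ≤ Real.exp x - 1)]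
    have h1 : -x + 1 ≤ Real.exp (-x) := Real.add_one_le_exp (-x)
    have h2 : Real.exp (-x) * Real.exp x = 1 := by rw [← Real.exp_add]; simp
    nlinarith [Real.exp_pos x]
  · have hx' : |x| = -x := abs_of_neg hx
    rw [hx']
    have h1 : x + 1 ≤ Real.exp x := Real.add_one_le_exp x
    have h3 : (1 : ℝ) ≤ Real.exp (-x) := Real.one_le_exp (by linarith)
    have h4 : Real.exp x ≤ 1 := by
      rw [show x = -(-x) by ring, Real.exp_neg]
      exact inv_le_one_of_one_le₀ h3
    rw [abs_of_nonpos (by linarith)]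
    nlinarith

private lemma wcs {n : ℕ} (a u v : Fin n → ℝ) (ha : ∀ i, 0 ≤ a i) :
    ∑ i, a i * (u i * v i) ≤
      Real.sqrt (∑ i, a i * u i ^ 2) * Real.sqrt (∑ i, a i * v i ^ 2) := by
  have h1 : ∀ i : Fin n, a i * (u i * v i)
      = (Real.sqrt (a i) * u i) * (Real.sqrt (a i) * v i) := by
    intro i
    have h := Real.mul_self_sqrt (ha i)
    calc a i * (u i * v i) = (Real.sqrt (a i) * Real.sqrt (a i)) * (u i * v i) := by rw [h]
      _ = (Real.sqrt (a i) * u i) * (Real.sqrt (a i) * v i) := by ring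
  have h2 : ∀ (w : Fin n → ℝ) (i : Fin n), a i * w i ^ 2 = (Real.sqrt (a i) * w i) ^ 2 := by
    intro w i; rw [mul_pow, Real.sq_sqrt (ha i)]
  calc ∑ i, a i * (u i * v i)
      = ∑ i, (Real.sqrt (a i) * u i) * (Real.sqrt (a i) * v i) :=
        Finset.sum_congr rfl fun i _ => h1 i
    _ ≤ Real.sqrt (∑ i, (Real.sqrt (a i) * u i) ^ 2)
        * Real.sqrt (∑ i, (Real.sqrt (a i) * v i) ^ 2) :=
        Real.sum_mul_le_sqrt_mul_sqrt _ _ _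
    _ = Real.sqrt (∑ i, a i * u i ^ 2) * Real.sqrt (∑ i, a i * v i ^ 2) := by
        rw [Finset.sum_congr rfl fun i _ => (h2 u i).symm,
          Finset.sum_congr rfl fun i _ => (h2 v i).symm]

private lemma quad_expand {n m : ℕ} (a : Fin n → ℝ) (c : Fin m → ℝ) (f : Fin n → Fin m → ℝ) :
    ∑ i, a i * (∑ j, c j * f i j) ^ 2
      = ∑ j, ∑ k, c j * (∑ i, a i * f i j * f i k) * c k := by
  have h1 : ∀ i : Fin n, a i * (∑ j, c j * f i j) ^ 2
      = ∑ j, ∑ k, c j * (a i * f i j * f i k) * c k := by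
    intro i
    rw [sq, Finset.sum_mul_sum, Finset.mul_sum]
    refine Finset.sum_congr rfl fun j _ => ?_
    rw [Finset.mul_sum]
    exact Finset.sum_congr rfl fun k _ => by ring
  rw [Finset.sum_congr rfl fun i _ => h1 i, Finset.sum_comm]
  refine Finset.sum_congr rfl fun j _ => ?_
  rw [Finset.sum_comm]
  refine Finset.sum_congr rfl fun k _ => ?_
  rw [Finset.mul_sum, Finset.sum_mul]

private lemma quad_pert {m : ℕ} (c : Fin m → ℝ) (A B : Fin m → Fin m → ℝ) {ε : ℝ}
    (h : ∀ j k, |A j k - B j k| ≤ ε) :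
    ∑ j, ∑ k, c j * A j k * c k ≤ ∑ j, ∑ k, c j * B j k * c k + ε * (∑ j, |c j|) ^ 2 := by
  have key : ∑ j, ∑ k, c j * A j k * c k - ∑ j, ∑ k, c j * B j k * c k
      = ∑ j, ∑ k, c j * (A j k - B j k) * c k := by
    rw [← Finset.sum_sub_distrib]
    refine Finset.sum_congr rfl fun j _ => ?_
    rw [← Finset.sum_sub_distrib]
    exact Finset.sum_congr rfl fun k _ => by ring
  have hb : ∑ j, ∑ k, c j * (A j k - B j k) * c k ≤ ∑ j, ∑ k, |c j| * ε * |c k| := by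
    refine Finset.sum_le_sum fun j _ => Finset.sum_le_sum fun k _ => ?_
    calc c j * (A j k - B j k) * c k ≤ |c j * (A j k - B j k) * c k| := le_abs_self _
      _ = |c j| * |A j k - B j k| * |c k| := by rw [abs_mul, abs_mul]
      _ ≤ |c j| * ε * |c k| := by
          have := h j k
          gcongr
  have heq : ∑ j, ∑ k, |c j| * ε * |c k| = ε * (∑ j, |c j|) ^ 2 := by
    rw [sq, Finset.sum_mul_sum, Finset.mul_sum]
    refine Finset.sum_congr rfl fun j _ => ?_
    rw [Finset.mul_sum]
    exact Finset.sum_congr rfl fun k _ => by ring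
  linarith [key ▸ (heq ▸ hb)]

private lemma swap_sum {n m : ℕ} (cst : ℝ) (X : Fin n → ℝ) (b : Fin m → ℝ)
    (h : Fin n → Fin m → ℝ) :
    ∑ j, b j * (cst * ∑ i, X i * h i j) = cst * ∑ i, X i * ∑ j, b j * h i j := by
  have h1 : ∀ j : Fin m, b j * (cst * ∑ i, X i * h i j)
      = ∑ i, cst * (X i * (b j * h i j)) := by
    intro j
    rw [Finset.mul_sum, Finset.mul_sum]
    exact Finset.sum_congr rfl fun i _ => by ring
  rw [Finset.sum_congr rfl fun j _ => h1 j, Finset.sum_comm, Finset.mul_sum]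
  refine Finset.sum_congr rfl fun i _ => ?_
  rw [Finset.mul_sum, Finset.mul_sum]

private lemma l1_bound {n m : ℕ} (c : Fin m → ℝ) (g : Fin n → Fin m → ℝ) {C B : ℝ}
    (hC : 0 ≤ C) (hg : ∀ i j, |g i j| ≤ C) (hc : ∑ j, |c j| ≤ B) (i : Fin n) :
    |∑ j, c j * g i j| ≤ C * B := by
  calc |∑ j, c j * g i j| ≤ ∑ j, |c j * g i j| := Finset.abs_sum_le_sum_abs _ _
    _ = ∑ j, |c j| * |g i j| := Finset.sum_congr rfl fun j _ => abs_mul _ _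
    _ ≤ ∑ j, |c j| * C := Finset.sum_le_sum fun j _ =>
        mul_le_mul_of_nonneg_left (hg i j) (abs_nonneg _)
    _ = C * ∑ j, |c j| := by rw [← Finset.sum_mul]; ring
    _ ≤ C * B := mul_le_mul_of_nonneg_left hc hC
set_option maxHeartbeats 1000000 in
/-- Control of the data-dependent weights and mean function in the gradient
(Lemma 7 of the paper). -/
theorem stmt_13 (n p q1 q2 : ℕ) (hn : 1 ≤ n)
    (Z D Y : Fin n → ℝ) (hZ : ∀ i, Z i = 0 ∨ Z i = 1)
    (fV : Fin n → Fin (p + 1) → ℝ)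
    (gV : Fin n → Fin (q1 + 1) → ℝ)
    (hV : Fin n → Fin (q2 + 1) → ℝ)
    (ψD ψD' ψY ψY' : ℝ → ℝ)
    (hψD : ∀ x, HasDerivAt ψD (ψD' x) x) (hψY : ∀ x, HasDerivAt ψY (ψY' x) x)
    (hψD' : ∀ x, 0 ≤ ψD' x) (hψY' : ∀ x, 0 ≤ ψY' x)
    (Cg2 : ℝ) (hCg2 : 0 < Cg2)
    (hψDratio : ∀ u v : ℝ, ψD' u ≤ ψD' v * Real.exp (Cg2 * |u - v|))
    (γhat γbar : Fin (p + 1) → ℝ)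
    (α1hat α1bar : Fin (q1 + 1) → ℝ)
    (α11hat α11bar : Fin (q2 + 1) → ℝ)
    -- bounded covariates and linear predictors
    (Cf0 Cg0 Cg1 Ch1 : ℝ)
    (hCf0 : ∀ i j, |fV i j| ≤ Cf0)
    (hCg0 : ∀ i j, |gV i j| ≤ Cg0)
    (hCg1 : ∀ i, |∑ j, α1bar j * gV i j| ≤ Cg1)
    (hCh1 : ∀ i, |∑ j, α11bar j * hV i j| ≤ Ch1)
    -- weights and residuals
    (what wbar : Fin n → ℝ)
    (hwhat : ∀ i, what i = Real.exp (-(∑ j, γhat j * fV i j)))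
    (hwbar : ∀ i, wbar i = Real.exp (-(∑ j, γbar j * fV i j)))
    (Rbar : Fin n → ℝ)
    (hRbar : ∀ i, Rbar i = D i * Y i
        - ψD (∑ j, α1bar j * gV i j) * ψY (∑ j, α11bar j * hV i j))
    -- sample second-moment matrices
    (SigTf : Fin (p + 1) → Fin (p + 1) → ℝ)
    (hSigTf : ∀ j k, SigTf j k = (1 / (n : ℝ)) * ∑ i, Z i * wbar i * fV i j * fV i k)
    (SigTg : Fin (q1 + 1) → Fin (q1 + 1) → ℝ)
    (hSigTg : ∀ j k, SigTg j k = (1 / (n : ℝ)) * ∑ i, Z i * wbar i * gV i j * gV i k)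
    (SigTf2 : Fin (p + 1) → Fin (p + 1) → ℝ)
    (hSigTf2 : ∀ j k, SigTf2 j k =
        (1 / (n : ℝ)) * ∑ i, Z i * wbar i * (Rbar i) ^ 2 * fV i j * fV i k)
    -- constants and rate hypotheses
    (lam0 lam1 sγ sα M0 M1 ϱ0 ϱ1 Bf1 Bf2 σ2 : ℝ)
    (hlam0 : 0 < lam0) (hlam1 : 0 < lam1) (hsγ : 1 ≤ sγ) (hsα : 1 ≤ sα)
    (hM0 : 0 ≤ M0) (hM1 : 0 ≤ M1) (hϱ0 : 0 ≤ ϱ0) (hϱ1 : 0 ≤ ϱ1)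
    (hBf1 : 0 ≤ Bf1) (hBf2 : 0 ≤ Bf2) (hσ2 : 0 ≤ σ2)
    (hγL1 : ∑ j, |γhat j - γbar j| ≤ M0 * sγ * lam0)
    (hγrate : sγ * lam0 ≤ ϱ0)
    (hγquad : ∑ j, ∑ k, (γhat j - γbar j) * SigTf j k * (γhat k - γbar k)
        ≤ M0 * sγ * lam0 ^ 2)
    (hα1L1 : ∑ j, |α1hat j - α1bar j| ≤ M1 * (sγ * lam0 + sα * lam1))
    (hα1rate : sγ * lam0 + sα * lam1 ≤ ϱ1)
    (hα1quad : ∑ j, ∑ k, (α1hat j - α1bar j) * SigTg j k * (α1hat k - α1bar k)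
        ≤ M1 * (sγ * lam0 ^ 2 + sα * lam1 ^ 2))
    -- population matrices: closeness and domination
    (Sigf Sigf2 : Fin (p + 1) → Fin (p + 1) → ℝ)
    (hSigfSymm : ∀ j k, Sigf j k = Sigf k j)
    (hSigf2Symm : ∀ j k, Sigf2 j k = Sigf2 k j)
    (hSigfclose : ∀ j k, |SigTf j k - Sigf j k| ≤ Bf1 * lam0)
    (hSigf2close : ∀ j k, |SigTf2 j k - Sigf2 j k| ≤ Bf2 * lam0)
    (hSigfdom : ∀ b : Fin (p + 1) → ℝ,
        ∑ j, ∑ k, b j * Sigf2 j k * b k ≤ σ2 * ∑ j, ∑ k, b j * Sigf j k * b k)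
    -- the vector b, the quadratic Q, and the constants of the lemma
    (b : Fin (q2 + 1) → ℝ) (hb : ∀ j, b j = α11hat j - α11bar j)
    (Q : ℝ) (hQ : Q = (1 / (n : ℝ)) * ∑ i, Z i * wbar i * (∑ j, b j * hV i j) ^ 2)
    (tCh1 : ℝ) (htCh1 : tCh1 = max |ψY (-Ch1)| |ψY Ch1|)
    (M01 : ℝ) (hM01 : M01 = Real.exp (2 * Cf0 * M0 * ϱ0)
        * (σ2 * M0 + (Bf2 + σ2 * Bf1) * M0 ^ 2 * ϱ0))
    (M11 : ℝ) (hM11 : M11 = (ψD' 0) ^ 2 * tCh1 ^ 2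
        * Real.exp (2 * Cf0 * M0 * ϱ0 + 2 * Cg2 * (Cg1 + Cg0 * M1 * ϱ1)) * M1) :
    ∑ j, b j * ((1 / (n : ℝ)) * ∑ i, Z i * what i
        * (D i * Y i - ψD (∑ l, α1hat l * gV i l) * ψY (∑ l, α11bar l * hV i l))
        * hV i j)
      ≤ ∑ j, b j * ((1 / (n : ℝ)) * ∑ i, Z i * wbar i * Rbar i * hV i j)
        + (Real.sqrt (M01 * sγ * lam0 ^ 2)
            + Real.sqrt M11 * Real.sqrt (sγ * lam0 ^ 2 + sα * lam1 ^ 2)) * Real.sqrt Q := by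
  classical
  have i0 : Fin n := ⟨0, hn⟩
  have hnpos : (0:ℝ) < n := by exact_mod_cast hn
  have hninv : (0:ℝ) < 1 / n := by positivity
  have hZ0 : ∀ i, (0:ℝ) ≤ Z i := fun i => by rcases hZ i with h | h <;> simp [h]
  have hw0 : ∀ i, (0:ℝ) < wbar i := fun i => by rw [hwbar]; exact Real.exp_pos _
  have hCf0' : (0:ℝ) ≤ Cf0 := le_trans (abs_nonneg _) (hCf0 i0 0)
  have hCg0' : (0:ℝ) ≤ Cg0 := le_trans (abs_nonneg _) (hCg0 i0 0)
  have hCg1' : (0:ℝ) ≤ Cg1 := le_trans (abs_nonneg _) (hCg1 i0)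
  have htCh1' : (0:ℝ) ≤ tCh1 := by
    rw [htCh1]; exact le_max_of_le_left (abs_nonneg _)
  -- weights: what = wbar * E
  have hwhat' : ∀ i, what i
      = wbar i * Real.exp (-(∑ j, (γhat j - γbar j) * fV i j)) := by
    intro i
    rw [hwhat i, hwbar i, ← Real.exp_add]
    congr 1
    have h : ∑ j, γhat j * fV i j
        = ∑ j, γbar j * fV i j + ∑ j, (γhat j - γbar j) * fV i j := by
      rw [← Finset.sum_add_distrib]
      exact Finset.sum_congr rfl fun j _ => by ring
    rw [h]; ring
  -- linear predictor bounds
  have hδf : ∀ i, |∑ j, (γhat j - γbar j) * fV i j| ≤ Cf0 * M0 * ϱ0 := by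
    intro i
    calc |∑ j, (γhat j - γbar j) * fV i j| ≤ Cf0 * (M0 * sγ * lam0) :=
          l1_bound _ _ hCf0' hCf0 hγL1 i
      _ = (Cf0 * M0) * (sγ * lam0) := by ring
      _ ≤ (Cf0 * M0) * ϱ0 :=
          mul_le_mul_of_nonneg_left hγrate (mul_nonneg hCf0' hM0)
      _ = Cf0 * M0 * ϱ0 := by ring
  have hΔg : ∀ i, |∑ j, (α1hat j - α1bar j) * gV i j| ≤ Cg0 * M1 * ϱ1 := by
    intro i
    calc |∑ j, (α1hat j - α1bar j) * gV i j| ≤ Cg0 * (M1 * (sγ * lam0 + sα * lam1)) :=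
          l1_bound _ _ hCg0' hCg0 hα1L1 i
      _ = (Cg0 * M1) * (sγ * lam0 + sα * lam1) := by ring
      _ ≤ (Cg0 * M1) * ϱ1 :=
          mul_le_mul_of_nonneg_left hα1rate (mul_nonneg hCg0' hM1)
      _ = Cg0 * M1 * ϱ1 := by ring
  -- ψY bound
  have hψYb : ∀ i, |ψY (∑ j, α11bar j * hV i j)| ≤ tCh1 := by
    have hψYmono : Monotone ψY := by
      have hdiff : Differentiable ℝ ψY := fun x => (hψY x).differentiableAt
      exact monotone_of_deriv_nonneg hdiff fun x => by
        rw [(hψY x).deriv]; exact hψY' x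
    intro i
    have h := abs_le.1 (hCh1 i)
    rw [htCh1, abs_le]
    constructor
    · have h1 := hψYmono h.1
      have h2 := neg_abs_le (ψY (-Ch1))
      have h3 := le_max_left |ψY (-Ch1)| |ψY Ch1|
      linarith
    · have h1 := hψYmono h.2
      have h2 := le_abs_self (ψY Ch1)
      have h3 := le_max_right |ψY (-Ch1)| |ψY Ch1|
      linarith
  -- mean value bound for ψD
  have hL0 : (0:ℝ) ≤ ψD' 0 * Real.exp (Cg2 * (Cg1 + Cg0 * M1 * ϱ1)) :=
    mul_nonneg (hψD' 0) (Real.exp_pos _).le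
  have hMVT : ∀ i, |ψD (∑ j, α1bar j * gV i j) - ψD (∑ j, α1hat j * gV i j)|
      ≤ (ψD' 0 * Real.exp (Cg2 * (Cg1 + Cg0 * M1 * ϱ1)))
        * |∑ j, (α1hat j - α1bar j) * gV i j| := by
    intro i
    set x := ∑ j, α1bar j * gV i j with hx
    set y := ∑ j, α1hat j * gV i j with hy
    have hyx : y - x = ∑ j, (α1hat j - α1bar j) * gV i j := by
      rw [hx, hy, ← Finset.sum_sub_distrib]
      exact Finset.sum_congr rfl fun j _ => by ring
    have hxb : |x| ≤ Cg1 := hCg1 i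
    have hyb : |y| ≤ Cg1 + Cg0 * M1 * ϱ1 := by
      have : |y - x| ≤ Cg0 * M1 * ϱ1 := hyx ▸ hΔg i
      calc |y| = |x + (y - x)| := by ring_nf
        _ ≤ |x| + |y - x| := abs_add_le _ _
        _ ≤ Cg1 + Cg0 * M1 * ϱ1 := add_le_add hxb this
    have hbound : ∀ z ∈ Set.Icc (min x y) (max x y),
        ‖ψD' z‖ ≤ ψD' 0 * Real.exp (Cg2 * (Cg1 + Cg0 * M1 * ϱ1)) := by
      intro z hz
      rw [Real.norm_eq_abs, abs_of_nonneg (hψD' z)]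
      have hzb : |z| ≤ Cg1 + Cg0 * M1 * ϱ1 := by
        have h1 : min x y ≤ z := hz.1
        have h2 : z ≤ max x y := hz.2
        have h3 : max x y ≤ Cg1 + Cg0 * M1 * ϱ1 :=
          max_le (le_trans (le_abs_self x) (le_trans hxb (by
            nlinarith [mul_nonneg (mul_nonneg hCg0' hM1) hϱ1]))) (le_trans (le_abs_self y) hyb)
        have h4 : -(Cg1 + Cg0 * M1 * ϱ1) ≤ min x y := by
          refine le_min ?_ ?_
          · linarith [neg_abs_le x, hxb, mul_nonneg (mul_nonneg hCg0' hM1) hϱ1]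
          · linarith [neg_abs_le y, hyb]
        rw [abs_le]; constructor <;> linarith
      calc ψD' z ≤ ψD' 0 * Real.exp (Cg2 * |z - 0|) := hψDratio z 0
        _ ≤ ψD' 0 * Real.exp (Cg2 * (Cg1 + Cg0 * M1 * ϱ1)) := by
            rw [sub_zero]
            exact mul_le_mul_of_nonneg_left
              (Real.exp_le_exp.2 (mul_le_mul_of_nonneg_left hzb hCg2.le)) (hψD' 0)
    have hmemx : x ∈ Set.Icc (min x y) (max x y) := ⟨min_le_left x y, le_max_left x y⟩
    have hmemy : y ∈ Set.Icc (min x y) (max x y) := ⟨min_le_right x y, le_max_right x y⟩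
    have := Convex.norm_image_sub_le_of_norm_hasDerivWithin_le
      (f := ψD) (f' := ψD') (s := Set.Icc (min x y) (max x y))
      (fun z _ => (hψD z).hasDerivWithinAt) hbound (convex_Icc _ _) hmemy hmemx
    rw [Real.norm_eq_abs, Real.norm_eq_abs] at this
    calc |ψD x - ψD y| ≤ (ψD' 0 * Real.exp (Cg2 * (Cg1 + Cg0 * M1 * ϱ1))) * |x - y| := this
      _ = (ψD' 0 * Real.exp (Cg2 * (Cg1 + Cg0 * M1 * ϱ1)))
          * |∑ j, (α1hat j - α1bar j) * gV i j| := by rw [← hyx, abs_sub_comm]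
  -- abbreviations (as plain expressions)
  have ha0 : ∀ i, (0:ℝ) ≤ (1/(n:ℝ)) * (Z i * wbar i) := fun i =>
    mul_nonneg hninv.le (mul_nonneg (hZ0 i) (hw0 i).le)
  -- Q as a weighted sum
  have hQeq : ∑ i, ((1/(n:ℝ)) * (Z i * wbar i)) * (∑ j, b j * hV i j) ^ 2 = Q := by
    rw [hQ, Finset.mul_sum]
    exact Finset.sum_congr rfl fun i _ => by ring
  -- the decomposition
  have hsplit : (1/(n:ℝ)) * ∑ i, (Z i * what i
        * (D i * Y i - ψD (∑ l, α1hat l * gV i l) * ψY (∑ l, α11bar l * hV i l)))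
          * (∑ j, b j * hV i j)
      = (1/(n:ℝ)) * ∑ i, (Z i * wbar i * Rbar i) * (∑ j, b j * hV i j)
        + ∑ i, ((1/(n:ℝ)) * (Z i * wbar i))
            * (((Real.exp (-(∑ j, (γhat j - γbar j) * fV i j)) - 1) * Rbar i)
              * (∑ j, b j * hV i j))
        + ∑ i, (1/(n:ℝ)) * ((Z i * what i
            * (ψD (∑ l, α1bar l * gV i l) - ψD (∑ l, α1hat l * gV i l))
            * ψY (∑ l, α11bar l * hV i l)) * (∑ j, b j * hV i j)) := by
    rw [Finset.mul_sum, Finset.mul_sum, ← Finset.sum_add_distrib, ← Finset.sum_add_distrib]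
    refine Finset.sum_congr rfl fun i _ => ?_
    rw [hwhat' i, hRbar i]
    ring
  -- quadratic form bridge for f
  have hqf2 : ∑ i, ((1/(n:ℝ)) * (Z i * wbar i * Rbar i ^ 2))
        * (∑ j, (γhat j - γbar j) * fV i j) ^ 2
      = ∑ j, ∑ k, (γhat j - γbar j) * SigTf2 j k * (γhat k - γbar k) := by
    rw [quad_expand]
    refine Finset.sum_congr rfl fun j _ => Finset.sum_congr rfl fun k _ => ?_
    rw [hSigTf2 j k]
    have hss : (1/(n:ℝ)) * ∑ i, Z i * wbar i * Rbar i ^ 2 * fV i j * fV i k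
        = ∑ i, 1/(n:ℝ) * (Z i * wbar i * Rbar i ^ 2) * fV i j * fV i k := by
      rw [Finset.mul_sum]
      exact Finset.sum_congr rfl fun i _ => by ring
    rw [hss]
  -- chain of quadratic-form bounds
  have hδl1sq : (∑ j, |γhat j - γbar j|) ^ 2 ≤ (M0 * sγ * lam0) ^ 2 :=
    pow_le_pow_left₀ (Finset.sum_nonneg fun j _ => abs_nonneg _) hγL1 2
  have hquadf2 : ∑ j, ∑ k, (γhat j - γbar j) * SigTf2 j k * (γhat k - γbar k)
      ≤ σ2 * M0 * sγ * lam0 ^ 2 + (Bf2 + σ2 * Bf1) * lam0 * (M0 * sγ * lam0) ^ 2 := by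
    have q1 : ∑ j, ∑ k, (γhat j - γbar j) * SigTf2 j k * (γhat k - γbar k)
        ≤ ∑ j, ∑ k, (γhat j - γbar j) * Sigf2 j k * (γhat k - γbar k)
          + (Bf2 * lam0) * (∑ j, |γhat j - γbar j|) ^ 2 :=
      quad_pert (fun j => γhat j - γbar j) SigTf2 Sigf2 hSigf2close
    have q2 : ∑ j, ∑ k, (γhat j - γbar j) * Sigf2 j k * (γhat k - γbar k)
        ≤ σ2 * ∑ j, ∑ k, (γhat j - γbar j) * Sigf j k * (γhat k - γbar k) :=
      hSigfdom (fun j => γhat j - γbar j)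
    have q3 : ∑ j, ∑ k, (γhat j - γbar j) * Sigf j k * (γhat k - γbar k)
        ≤ ∑ j, ∑ k, (γhat j - γbar j) * SigTf j k * (γhat k - γbar k)
          + (Bf1 * lam0) * (∑ j, |γhat j - γbar j|) ^ 2 :=
      quad_pert (fun j => γhat j - γbar j) Sigf SigTf
        (fun j k => by rw [abs_sub_comm]; exact hSigfclose j k)
    have q4 := hγquad
    have hb2 : (Bf2 * lam0) * (∑ j, |γhat j - γbar j|) ^ 2
        ≤ (Bf2 * lam0) * (M0 * sγ * lam0) ^ 2 :=
      mul_le_mul_of_nonneg_left hδl1sq (mul_nonneg hBf2 hlam0.le)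
    have hb1 : (Bf1 * lam0) * (∑ j, |γhat j - γbar j|) ^ 2
        ≤ (Bf1 * lam0) * (M0 * sγ * lam0) ^ 2 :=
      mul_le_mul_of_nonneg_left hδl1sq (mul_nonneg hBf1 hlam0.le)
    have q5 : ∑ j, ∑ k, (γhat j - γbar j) * Sigf j k * (γhat k - γbar k)
        ≤ M0 * sγ * lam0 ^ 2 + (Bf1 * lam0) * (M0 * sγ * lam0) ^ 2 := by linarith
    have q6 : σ2 * (∑ j, ∑ k, (γhat j - γbar j) * Sigf j k * (γhat k - γbar k))
        ≤ σ2 * (M0 * sγ * lam0 ^ 2 + (Bf1 * lam0) * (M0 * sγ * lam0) ^ 2) :=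
      mul_le_mul_of_nonneg_left q5 hσ2
    have q7 : σ2 * (M0 * sγ * lam0 ^ 2 + (Bf1 * lam0) * (M0 * sγ * lam0) ^ 2)
          + (Bf2 * lam0) * (M0 * sγ * lam0) ^ 2
        = σ2 * M0 * sγ * lam0 ^ 2 + (Bf2 + σ2 * Bf1) * lam0 * (M0 * sγ * lam0) ^ 2 := by
      ring
    linarith
  -- pointwise exponential bound
  have hexppt : ∀ i, (Real.exp (-(∑ j, (γhat j - γbar j) * fV i j)) - 1) ^ 2
      ≤ Real.exp (2 * Cf0 * M0 * ϱ0) * (∑ j, (γhat j - γbar j) * fV i j) ^ 2 := by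
    intro i
    set x := ∑ j, (γhat j - γbar j) * fV i j with hxdef
    have h1 : |Real.exp (-x) - 1| ≤ |x| * Real.exp |x| := by
      have := exp_sub_one_abs (-x)
      rwa [abs_neg] at this
    have h3 : Real.exp |x| ≤ Real.exp (Cf0 * M0 * ϱ0) := Real.exp_le_exp.2 (hδf i)
    have h5 : |Real.exp (-x) - 1| ≤ |x| * Real.exp (Cf0 * M0 * ϱ0) :=
      le_trans h1 (mul_le_mul_of_nonneg_left h3 (abs_nonneg x))
    have h4 : Real.exp (2 * Cf0 * M0 * ϱ0) = Real.exp (Cf0 * M0 * ϱ0) ^ 2 := by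
      rw [sq, ← Real.exp_add]; congr 1; ring
    calc (Real.exp (-x) - 1) ^ 2 = |Real.exp (-x) - 1| ^ 2 := (sq_abs _).symm
      _ ≤ (|x| * Real.exp (Cf0 * M0 * ϱ0)) ^ 2 :=
          pow_le_pow_left₀ (abs_nonneg _) h5 2
      _ = Real.exp (2 * Cf0 * M0 * ϱ0) * x ^ 2 := by
          rw [mul_pow, sq_abs, h4]; ring
  -- bound the A-term second moment
  have hu : ∑ i, ((1/(n:ℝ)) * (Z i * wbar i))
        * ((Real.exp (-(∑ j, (γhat j - γbar j) * fV i j)) - 1) * Rbar i) ^ 2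
      ≤ M01 * sγ * lam0 ^ 2 := by
    have step1 : ∑ i, ((1/(n:ℝ)) * (Z i * wbar i))
          * ((Real.exp (-(∑ j, (γhat j - γbar j) * fV i j)) - 1) * Rbar i) ^ 2
        ≤ ∑ i, Real.exp (2 * Cf0 * M0 * ϱ0) * (((1/(n:ℝ)) * (Z i * wbar i * Rbar i ^ 2))
            * (∑ j, (γhat j - γbar j) * fV i j) ^ 2) := by
      refine Finset.sum_le_sum fun i _ => ?_
      have h1 := hexppt i
      have h2 : (0:ℝ) ≤ (1/(n:ℝ)) * (Z i * wbar i * Rbar i ^ 2) := by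
        have := hZ0 i; have := (hw0 i).le; positivity
      calc ((1/(n:ℝ)) * (Z i * wbar i))
            * ((Real.exp (-(∑ j, (γhat j - γbar j) * fV i j)) - 1) * Rbar i) ^ 2
          = ((1/(n:ℝ)) * (Z i * wbar i * Rbar i ^ 2))
            * (Real.exp (-(∑ j, (γhat j - γbar j) * fV i j)) - 1) ^ 2 := by ring
        _ ≤ ((1/(n:ℝ)) * (Z i * wbar i * Rbar i ^ 2))
            * (Real.exp (2 * Cf0 * M0 * ϱ0) * (∑ j, (γhat j - γbar j) * fV i j) ^ 2) :=
            mul_le_mul_of_nonneg_left h1 h2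
        _ = Real.exp (2 * Cf0 * M0 * ϱ0) * (((1/(n:ℝ)) * (Z i * wbar i * Rbar i ^ 2))
            * (∑ j, (γhat j - γbar j) * fV i j) ^ 2) := by ring
    have step2 : ∑ i, Real.exp (2 * Cf0 * M0 * ϱ0) * (((1/(n:ℝ)) * (Z i * wbar i * Rbar i ^ 2))
          * (∑ j, (γhat j - γbar j) * fV i j) ^ 2)
        = Real.exp (2 * Cf0 * M0 * ϱ0)
          * ∑ j, ∑ k, (γhat j - γbar j) * SigTf2 j k * (γhat k - γbar k) := by
      rw [← Finset.mul_sum, hqf2]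
    have step3 : σ2 * M0 * sγ * lam0 ^ 2 + (Bf2 + σ2 * Bf1) * lam0 * (M0 * sγ * lam0) ^ 2
        ≤ (σ2 * M0 + (Bf2 + σ2 * Bf1) * M0 ^ 2 * ϱ0) * (sγ * lam0 ^ 2) := by
      have hr : (sγ * lam0) * (sγ * lam0 ^ 2) ≤ ϱ0 * (sγ * lam0 ^ 2) :=
        mul_le_mul_of_nonneg_right hγrate (by positivity)
      have hkey : (Bf2 + σ2 * Bf1) * M0 ^ 2 * ((sγ * lam0) * (sγ * lam0 ^ 2))
          ≤ (Bf2 + σ2 * Bf1) * M0 ^ 2 * (ϱ0 * (sγ * lam0 ^ 2)) := by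
        refine mul_le_mul_of_nonneg_left hr ?_
        have : (0:ℝ) ≤ Bf2 + σ2 * Bf1 := by positivity
        positivity
      nlinarith
    have step4 : Real.exp (2 * Cf0 * M0 * ϱ0)
          * ∑ j, ∑ k, (γhat j - γbar j) * SigTf2 j k * (γhat k - γbar k)
        ≤ Real.exp (2 * Cf0 * M0 * ϱ0)
          * ((σ2 * M0 + (Bf2 + σ2 * Bf1) * M0 ^ 2 * ϱ0) * (sγ * lam0 ^ 2)) :=
      mul_le_mul_of_nonneg_left (le_trans hquadf2 step3) (Real.exp_pos _).le
    calc _ ≤ _ := step1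
      _ = _ := step2
      _ ≤ _ := step4
      _ = M01 * sγ * lam0 ^ 2 := by rw [hM01]; ring
  -- the A bound
  have hA : ∑ i, ((1/(n:ℝ)) * (Z i * wbar i))
        * (((Real.exp (-(∑ j, (γhat j - γbar j) * fV i j)) - 1) * Rbar i)
          * (∑ j, b j * hV i j))
      ≤ Real.sqrt (M01 * sγ * lam0 ^ 2) * Real.sqrt Q := by
    have h1 : ∑ i, ((1/(n:ℝ)) * (Z i * wbar i))
          * (((Real.exp (-(∑ j, (γhat j - γbar j) * fV i j)) - 1) * Rbar i)
            * (∑ j, b j * hV i j))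
        ≤ Real.sqrt (∑ i, ((1/(n:ℝ)) * (Z i * wbar i))
            * ((Real.exp (-(∑ j, (γhat j - γbar j) * fV i j)) - 1) * Rbar i) ^ 2)
          * Real.sqrt (∑ i, ((1/(n:ℝ)) * (Z i * wbar i)) * (∑ j, b j * hV i j) ^ 2) :=
      wcs (fun i => (1/(n:ℝ)) * (Z i * wbar i))
        (fun i => (Real.exp (-(∑ j, (γhat j - γbar j) * fV i j)) - 1) * Rbar i)
        (fun i => ∑ j, b j * hV i j) ha0
    rw [hQeq] at h1
    exact le_trans h1 (mul_le_mul_of_nonneg_right (Real.sqrt_le_sqrt hu) (Real.sqrt_nonneg _))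
  -- quadratic form bridge for g
  have hqg : ∑ i, ((1/(n:ℝ)) * (Z i * wbar i)) * (∑ j, (α1hat j - α1bar j) * gV i j) ^ 2
      = ∑ j, ∑ k, (α1hat j - α1bar j) * SigTg j k * (α1hat k - α1bar k) := by
    rw [quad_expand]
    refine Finset.sum_congr rfl fun j _ => Finset.sum_congr rfl fun k _ => ?_
    rw [hSigTg j k]
    have hss : (1/(n:ℝ)) * ∑ i, Z i * wbar i * gV i j * gV i k
        = ∑ i, 1/(n:ℝ) * (Z i * wbar i) * gV i j * gV i k := by
      rw [Finset.mul_sum]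
      exact Finset.sum_congr rfl fun i _ => by ring
    rw [hss]
  -- the K constant and sqrt identity
  have hK0 : (0:ℝ) ≤ Real.exp (Cf0 * M0 * ϱ0)
      * ((ψD' 0 * Real.exp (Cg2 * (Cg1 + Cg0 * M1 * ϱ1))) * tCh1) :=
    mul_nonneg (Real.exp_pos _).le (mul_nonneg hL0 htCh1')
  have hsqrtM11 : Real.sqrt M11
      = (Real.exp (Cf0 * M0 * ϱ0)
          * ((ψD' 0 * Real.exp (Cg2 * (Cg1 + Cg0 * M1 * ϱ1))) * tCh1)) * Real.sqrt M1 := by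
    have hM11K : M11 = (Real.exp (Cf0 * M0 * ϱ0)
        * ((ψD' 0 * Real.exp (Cg2 * (Cg1 + Cg0 * M1 * ϱ1))) * tCh1)) ^ 2 * M1 := by
      rw [hM11]
      have e1 : Real.exp (2 * Cf0 * M0 * ϱ0 + 2 * Cg2 * (Cg1 + Cg0 * M1 * ϱ1))
          = (Real.exp (Cf0 * M0 * ϱ0) * Real.exp (Cg2 * (Cg1 + Cg0 * M1 * ϱ1))) ^ 2 := by
        rw [← Real.exp_add, sq, ← Real.exp_add]
        congr 1
        ring
      rw [e1]; ring
    rw [hM11K, Real.sqrt_mul (sq_nonneg _), Real.sqrt_sq hK0]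
  -- the B pointwise bound
  have hBpt : ∀ i, (1/(n:ℝ)) * ((Z i * what i
        * (ψD (∑ l, α1bar l * gV i l) - ψD (∑ l, α1hat l * gV i l))
        * ψY (∑ l, α11bar l * hV i l)) * (∑ j, b j * hV i j))
      ≤ (Real.exp (Cf0 * M0 * ϱ0)
          * ((ψD' 0 * Real.exp (Cg2 * (Cg1 + Cg0 * M1 * ϱ1))) * tCh1))
        * (((1/(n:ℝ)) * (Z i * wbar i))
          * (|∑ j, (α1hat j - α1bar j) * gV i j| * |∑ j, b j * hV i j|)) := by
    intro i
    have hE : Real.exp (-(∑ j, (γhat j - γbar j) * fV i j)) ≤ Real.exp (Cf0 * M0 * ϱ0) :=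
      Real.exp_le_exp.2 (le_trans (neg_le_abs _) (hδf i))
    have hprod1 : |ψD (∑ l, α1bar l * gV i l) - ψD (∑ l, α1hat l * gV i l)|
          * |ψY (∑ l, α11bar l * hV i l)|
        ≤ ((ψD' 0 * Real.exp (Cg2 * (Cg1 + Cg0 * M1 * ϱ1)))
            * |∑ j, (α1hat j - α1bar j) * gV i j|) * tCh1 :=
      mul_le_mul (hMVT i) (hψYb i) (abs_nonneg _) (mul_nonneg hL0 (abs_nonneg _))
    have hprod2 : (|ψD (∑ l, α1bar l * gV i l) - ψD (∑ l, α1hat l * gV i l)|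
          * |ψY (∑ l, α11bar l * hV i l)|) * |∑ j, b j * hV i j|
        ≤ (((ψD' 0 * Real.exp (Cg2 * (Cg1 + Cg0 * M1 * ϱ1)))
            * |∑ j, (α1hat j - α1bar j) * gV i j|) * tCh1) * |∑ j, b j * hV i j| :=
      mul_le_mul_of_nonneg_right hprod1 (abs_nonneg _)
    have hprod3 : Real.exp (-(∑ j, (γhat j - γbar j) * fV i j))
          * ((|ψD (∑ l, α1bar l * gV i l) - ψD (∑ l, α1hat l * gV i l)|
            * |ψY (∑ l, α11bar l * hV i l)|) * |∑ j, b j * hV i j|)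
        ≤ Real.exp (Cf0 * M0 * ϱ0)
          * ((((ψD' 0 * Real.exp (Cg2 * (Cg1 + Cg0 * M1 * ϱ1)))
            * |∑ j, (α1hat j - α1bar j) * gV i j|) * tCh1) * |∑ j, b j * hV i j|) :=
      mul_le_mul hE hprod2 (by positivity) (Real.exp_pos _).le
    calc (1/(n:ℝ)) * ((Z i * what i
          * (ψD (∑ l, α1bar l * gV i l) - ψD (∑ l, α1hat l * gV i l))
          * ψY (∑ l, α11bar l * hV i l)) * (∑ j, b j * hV i j))
        = ((1/(n:ℝ)) * (Z i * wbar i))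
          * (Real.exp (-(∑ j, (γhat j - γbar j) * fV i j))
            * (((ψD (∑ l, α1bar l * gV i l) - ψD (∑ l, α1hat l * gV i l))
              * ψY (∑ l, α11bar l * hV i l)) * (∑ j, b j * hV i j))) := by
          rw [hwhat' i]; ring
      _ ≤ ((1/(n:ℝ)) * (Z i * wbar i))
          * (Real.exp (-(∑ j, (γhat j - γbar j) * fV i j))
            * |((ψD (∑ l, α1bar l * gV i l) - ψD (∑ l, α1hat l * gV i l))
              * ψY (∑ l, α11bar l * hV i l)) * (∑ j, b j * hV i j)|) := by
          refine mul_le_mul_of_nonneg_left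
            (mul_le_mul_of_nonneg_left (le_abs_self _) (Real.exp_pos _).le) (ha0 i)
      _ = ((1/(n:ℝ)) * (Z i * wbar i))
          * (Real.exp (-(∑ j, (γhat j - γbar j) * fV i j))
            * ((|ψD (∑ l, α1bar l * gV i l) - ψD (∑ l, α1hat l * gV i l)|
              * |ψY (∑ l, α11bar l * hV i l)|) * |∑ j, b j * hV i j|)) := by
          rw [abs_mul, abs_mul]
      _ ≤ ((1/(n:ℝ)) * (Z i * wbar i))
          * (Real.exp (Cf0 * M0 * ϱ0)
            * ((((ψD' 0 * Real.exp (Cg2 * (Cg1 + Cg0 * M1 * ϱ1)))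
              * |∑ j, (α1hat j - α1bar j) * gV i j|) * tCh1) * |∑ j, b j * hV i j|)) :=
          mul_le_mul_of_nonneg_left hprod3 (ha0 i)
      _ = (Real.exp (Cf0 * M0 * ϱ0)
            * ((ψD' 0 * Real.exp (Cg2 * (Cg1 + Cg0 * M1 * ϱ1))) * tCh1))
          * (((1/(n:ℝ)) * (Z i * wbar i))
            * (|∑ j, (α1hat j - α1bar j) * gV i j| * |∑ j, b j * hV i j|)) := by
          ring
  -- the B bound
  have hB : ∑ i, (1/(n:ℝ)) * ((Z i * what i
        * (ψD (∑ l, α1bar l * gV i l) - ψD (∑ l, α1hat l * gV i l))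
        * ψY (∑ l, α11bar l * hV i l)) * (∑ j, b j * hV i j))
      ≤ Real.sqrt M11 * Real.sqrt (sγ * lam0 ^ 2 + sα * lam1 ^ 2) * Real.sqrt Q := by
    have hsum : ∑ i, (1/(n:ℝ)) * ((Z i * what i
          * (ψD (∑ l, α1bar l * gV i l) - ψD (∑ l, α1hat l * gV i l))
          * ψY (∑ l, α11bar l * hV i l)) * (∑ j, b j * hV i j))
        ≤ (Real.exp (Cf0 * M0 * ϱ0)
            * ((ψD' 0 * Real.exp (Cg2 * (Cg1 + Cg0 * M1 * ϱ1))) * tCh1))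
          * ∑ i, ((1/(n:ℝ)) * (Z i * wbar i))
            * (|∑ j, (α1hat j - α1bar j) * gV i j| * |∑ j, b j * hV i j|) := by
      rw [Finset.mul_sum]
      exact Finset.sum_le_sum fun i _ => hBpt i
    have hcs : ∑ i, ((1/(n:ℝ)) * (Z i * wbar i))
          * (|∑ j, (α1hat j - α1bar j) * gV i j| * |∑ j, b j * hV i j|)
        ≤ Real.sqrt (∑ i, ((1/(n:ℝ)) * (Z i * wbar i))
            * |∑ j, (α1hat j - α1bar j) * gV i j| ^ 2)
          * Real.sqrt (∑ i, ((1/(n:ℝ)) * (Z i * wbar i)) * |∑ j, b j * hV i j| ^ 2) :=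
      wcs (fun i => (1/(n:ℝ)) * (Z i * wbar i))
        (fun i => |∑ j, (α1hat j - α1bar j) * gV i j|)
        (fun i => |∑ j, b j * hV i j|) ha0
    have habs1 : ∑ i, ((1/(n:ℝ)) * (Z i * wbar i))
          * |∑ j, (α1hat j - α1bar j) * gV i j| ^ 2
        = ∑ i, ((1/(n:ℝ)) * (Z i * wbar i)) * (∑ j, (α1hat j - α1bar j) * gV i j) ^ 2 :=
      Finset.sum_congr rfl fun i _ => by rw [sq_abs]
    have habs2 : ∑ i, ((1/(n:ℝ)) * (Z i * wbar i)) * |∑ j, b j * hV i j| ^ 2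
        = ∑ i, ((1/(n:ℝ)) * (Z i * wbar i)) * (∑ j, b j * hV i j) ^ 2 :=
      Finset.sum_congr rfl fun i _ => by rw [sq_abs]
    rw [habs1, habs2, hQeq, hqg] at hcs
    have hqgle : Real.sqrt (∑ j, ∑ k, (α1hat j - α1bar j) * SigTg j k * (α1hat k - α1bar k))
        ≤ Real.sqrt (M1 * (sγ * lam0 ^ 2 + sα * lam1 ^ 2)) := Real.sqrt_le_sqrt hα1quad
    calc ∑ i, (1/(n:ℝ)) * ((Z i * what i
          * (ψD (∑ l, α1bar l * gV i l) - ψD (∑ l, α1hat l * gV i l))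
          * ψY (∑ l, α11bar l * hV i l)) * (∑ j, b j * hV i j))
        ≤ (Real.exp (Cf0 * M0 * ϱ0)
            * ((ψD' 0 * Real.exp (Cg2 * (Cg1 + Cg0 * M1 * ϱ1))) * tCh1))
          * ∑ i, ((1/(n:ℝ)) * (Z i * wbar i))
            * (|∑ j, (α1hat j - α1bar j) * gV i j| * |∑ j, b j * hV i j|) := hsum
      _ ≤ (Real.exp (Cf0 * M0 * ϱ0)
            * ((ψD' 0 * Real.exp (Cg2 * (Cg1 + Cg0 * M1 * ϱ1))) * tCh1))
          * (Real.sqrt (∑ j, ∑ k, (α1hat j - α1bar j) * SigTg j k * (α1hat k - α1bar k))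
            * Real.sqrt Q) := mul_le_mul_of_nonneg_left hcs hK0
      _ ≤ (Real.exp (Cf0 * M0 * ϱ0)
            * ((ψD' 0 * Real.exp (Cg2 * (Cg1 + Cg0 * M1 * ϱ1))) * tCh1))
          * (Real.sqrt (M1 * (sγ * lam0 ^ 2 + sα * lam1 ^ 2)) * Real.sqrt Q) :=
          mul_le_mul_of_nonneg_left
            (mul_le_mul_of_nonneg_right hqgle (Real.sqrt_nonneg _)) hK0
      _ = Real.sqrt M11 * Real.sqrt (sγ * lam0 ^ 2 + sα * lam1 ^ 2) * Real.sqrt Q := by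
          rw [Real.sqrt_mul hM1, hsqrtM11]; ring
  -- put everything together
  have hbaseL : ∑ j, b j * ((1 / (n : ℝ)) * ∑ i, Z i * what i
        * (D i * Y i - ψD (∑ l, α1hat l * gV i l) * ψY (∑ l, α11bar l * hV i l))
        * hV i j)
      = (1/(n:ℝ)) * ∑ i, (Z i * what i
        * (D i * Y i - ψD (∑ l, α1hat l * gV i l) * ψY (∑ l, α11bar l * hV i l)))
          * (∑ j, b j * hV i j) :=
    swap_sum (1/(n:ℝ)) (fun i => Z i * what i
      * (D i * Y i - ψD (∑ l, α1hat l * gV i l) * ψY (∑ l, α11bar l * hV i l))) b hV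
  have hbaseR : ∑ j, b j * ((1 / (n : ℝ)) * ∑ i, Z i * wbar i * Rbar i * hV i j)
      = (1/(n:ℝ)) * ∑ i, (Z i * wbar i * Rbar i) * (∑ j, b j * hV i j) :=
    swap_sum (1/(n:ℝ)) (fun i => Z i * wbar i * Rbar i) b hV
  rw [hbaseL, hbaseR, hsplit]
  have hfinal := add_le_add (add_le_add (le_refl ((1/(n:ℝ))
    * ∑ i, (Z i * wbar i * Rbar i) * (∑ j, b j * hV i j))) hA) hB
  refine le_trans hfinal (le_of_eq ?_)
  ring
end

section
/- ℓ₁ rearrangement step of the Lasso analysis: let q ≥ 1, let α̂, ᾱ ∈ ℝ^{1+q} (coordinates indexed 0,…,q), let b = α̂ − ᾱ, and let S ⊆ {0,…,q} contain 0 and contain every j ∈ {1,…,q} with ᾱ_j ≠ 0. Suppose real numbers D†, a ≥ 0, Q ≥ 0, λ ≥ 0, A ≥ 0 and B ∈ ℝ satisfy D† + A·λ·Σ_{j=1}^q |α̂_j| ≤ B·λ·‖b‖₁ + A·λ·Σ_{j=1}^q |ᾱ_j| + a·Q^{1/2}. Then D† + (A−B)·λ·‖b‖₁ ≤ a·Q^{1/2}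 + 2·A·λ·Σ_{j∈S} |b_j|. -/
open Finset

/-- ℓ₁ rearrangement step of the Lasso analysis. -/
theorem stmt_14 (q : ℕ) (hq : 1 ≤ q)
    (αhat αbar : Fin (q + 1) → ℝ) (b : Fin (q + 1) → ℝ)
    (hb : ∀ j, b j = αhat j - αbar j)
    (S : Finset (Fin (q + 1))) (h0S : (0 : Fin (q + 1)) ∈ S)
    (hS : ∀ j : Fin q, αbar j.succ ≠ 0 → j.succ ∈ S)
    (Ddag a Q lam A B : ℝ)
    (ha : 0 ≤ a) (hQ : 0 ≤ Q) (hlam : 0 ≤ lam) (hA : 0 ≤ A)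
    (hineq : Ddag + A * lam * ∑ j : Fin q, |αhat j.succ| ≤
      B * lam * (∑ j, |b j|) + A * lam * (∑ j : Fin q, |αbar j.succ|)
        + a * Real.sqrt Q) :
    Ddag + (A - B) * lam * ∑ j, |b j| ≤
      a * Real.sqrt Q + 2 * A * lam * ∑ j ∈ S, |b j| := by
  set h : Fin (q + 1) → ℝ := fun j =>
    |b j| + (if j = 0 then 0 else |αbar j| - |αhat j|) with hh
  -- any nonzero index has αbar vanishing outside S
  have hzero : ∀ j : Fin (q + 1), j ∉ S → j ≠ 0 → αbar j = 0 := by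
    intro j hjS hj0
    by_contra hne
    have : j = (j.pred hj0).succ := (Fin.succ_pred j hj0).symm
    exact hjS (this ▸ hS (j.pred hj0) (by rwa [Fin.succ_pred]))
  -- key pointwise bound and sum bound
  have key : ∑ j, h j ≤ 2 * ∑ j ∈ S, |b j| := by
    have hsplit : ∑ j, h j = ∑ j ∈ S, h j + ∑ j ∈ univ \ S, h j := by
      have := Finset.sum_sdiff (f := h) (Finset.subset_univ S); linarith
    rw [hsplit]
    have h1 : ∑ j ∈ S, h j ≤ ∑ j ∈ S, 2 * |b j| := by
      apply Finset.sum_le_sum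
      intro j _
      simp only [hh]
      by_cases hj : j = 0
      · simp [hj, abs_nonneg]; linarith [abs_nonneg (b 0)]
      · simp only [if_neg hj]
        have : |αbar j| - |αhat j| ≤ |b j| := by
          have := abs_sub_abs_le_abs_sub (αbar j) (αhat j)
          rw [hb j]; rw [abs_sub_comm] at this; linarith
        linarith
    have h2 : ∑ j ∈ univ \ S, h j = 0 := by
      apply Finset.sum_eq_zero
      intro j hj
      rw [Finset.mem_sdiff] at hj
      have hj0 : j ≠ 0 := fun h => hj.2 (h ▸ h0S)
      have hz := hzero j hj.2 hj0
      simp only [hh, if_neg hj0, hz, hb j, sub_zero, sub_self, add_zero, abs_zero]; ring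
    rw [h2, Finset.mul_sum]
    linarith [h1]
  -- rewrite ∑ h in terms of the Fin q sums
  have hsum : ∑ j, h j = (∑ j, |b j|)
      + ((∑ j : Fin q, |αbar j.succ|) - ∑ j : Fin q, |αhat j.succ|) := by
    simp only [hh]
    rw [Finset.sum_add_distrib]
    congr 1
    rw [Fin.sum_univ_succ]
    simp [Fin.succ_ne_zero, Finset.sum_sub_distrib]
  rw [hsum] at key
  have hAlam : 0 ≤ A * lam := mul_nonneg hA hlam
  nlinarith [mul_le_mul_of_nonneg_left key hAlam]
end

section
/- Theoretical compatibility implies empirical compatibility (Lemma 10 of the paper): let m ≥ 1, let S ⊆ {0,…,m−1} be nonempty with cardinality |S|, let Σ and Σ̃ be m×m real matrices, and let ν > 0, μ > 1, δ ≥ 0. Assume the compatibility condition for Σ: ν²·(Σ_{j∈S}|b_j|)² ≤ |S|·bᵀΣb for every b ∈ ℝ^m with Σ_{j∉S}|b_j| ≤ μ·Σ_{j∈S}|b_j|. Assume max_{j,k} |Σ̃_{jk} − Σ_{jk}| ≤ δ and ϱ := ν^{−2}·δ·(1+μ)²·|S| < 1. Then for every b ∈ ℝ^m with Σ_{j∉S}|b_j|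 ≤ μ·Σ_{j∈S}|b_j| one has ν²·(1−ϱ)·(Σ_{j∈S}|b_j|)² ≤ |S|·bᵀΣ̃b. -/
open Finset

/-- Theoretical compatibility implies empirical compatibility
(Lemma 10 of the paper). -/
theorem stmt_15 (m : ℕ) (hm : 1 ≤ m)
    (S : Finset (Fin m)) (hS : S.Nonempty)
    (Sig SigT : Fin m → Fin m → ℝ)
    (ν μ δ : ℝ) (hν : 0 < ν) (hμ : 1 < μ) (hδ : 0 ≤ δ)
    (hcompat : ∀ b : Fin m → ℝ, (∑ j ∈ Sᶜ, |b j|) ≤ μ * ∑ j ∈ S, |b j| →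
      ν ^ 2 * (∑ j ∈ S, |b j|) ^ 2 ≤ (S.card : ℝ) * ∑ j, ∑ k, b j * Sig j k * b k)
    (hclose : ∀ j k, |SigT j k - Sig j k| ≤ δ)
    (ϱ : ℝ) (hϱdef : ϱ = (ν ^ 2)⁻¹ * δ * (1 + μ) ^ 2 * (S.card : ℝ))
    (hϱ : ϱ < 1) :
    ∀ b : Fin m → ℝ, (∑ j ∈ Sᶜ, |b j|) ≤ μ * ∑ j ∈ S, |b j| →
      ν ^ 2 * (1 - ϱ) * (∑ j ∈ S, |b j|) ^ 2 ≤
        (S.card : ℝ) * ∑ j, ∑ k, b j * SigT j k * b k := by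
  intro b hb
  set A := ∑ j ∈ S, |b j| with hAdef
  set T := ∑ j : Fin m, |b j| with hTdef
  have hA : 0 ≤ A := Finset.sum_nonneg fun j _ => abs_nonneg _
  have hTnn : 0 ≤ T := Finset.sum_nonneg fun j _ => abs_nonneg _
  have hsplit : A + (∑ j ∈ Sᶜ, |b j|) = T := Finset.sum_add_sum_compl S _
  have hT : T ≤ (1 + μ) * A := by nlinarith
  have h1 : (∑ j, ∑ k, b j * SigT j k * b k) - ∑ j, ∑ k, b j * Sig j k * b k
      = ∑ j, ∑ k, b j * (SigT j k - Sig j k) * b k := by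
    rw [← Finset.sum_sub_distrib]
    refine Finset.sum_congr rfl fun j _ => ?_
    rw [← Finset.sum_sub_distrib]
    exact Finset.sum_congr rfl fun k _ => by ring
  have hdiff : |(∑ j, ∑ k, b j * SigT j k * b k) - ∑ j, ∑ k, b j * Sig j k * b k|
      ≤ δ * T ^ 2 := by
    rw [h1]
    calc |∑ j, ∑ k, b j * (SigT j k - Sig j k) * b k|
        ≤ ∑ j, |∑ k, b j * (SigT j k - Sig j k) * b k| :=
          Finset.abs_sum_le_sum_abs _ _
      _ ≤ ∑ j, ∑ k, |b j * (SigT j k - Sig j k) * b k| :=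
          Finset.sum_le_sum fun j _ => Finset.abs_sum_le_sum_abs _ _
      _ ≤ ∑ j, ∑ k, |b j| * δ * |b k| := by
          refine Finset.sum_le_sum fun j _ => Finset.sum_le_sum fun k _ => ?_
          rw [abs_mul, abs_mul]
          have h2 := hclose j k
          have := mul_le_mul_of_nonneg_left h2 (abs_nonneg (b j))
          nlinarith [abs_nonneg (b k)]
      _ = δ * T ^ 2 := by
          rw [hTdef, sq, Finset.sum_mul_sum, Finset.mul_sum]
          refine Finset.sum_congr rfl fun j _ => ?_
          rw [Finset.mul_sum]
          exact Finset.sum_congr rfl fun k _ => by ring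
  have hcard : (0:ℝ) ≤ (S.card : ℝ) := Nat.cast_nonneg _
  have hSig := hcompat b hb
  have hT2 : T ^ 2 ≤ ((1 + μ) * A) ^ 2 := by nlinarith
  have hν2ϱ : ν ^ 2 * ϱ = δ * (1 + μ) ^ 2 * (S.card : ℝ) := by
    rw [hϱdef]; field_simp
  have hmul : (S.card : ℝ) * (δ * T ^ 2) ≤ ν ^ 2 * ϱ * A ^ 2 := by
    rw [hν2ϱ]
    nlinarith [mul_le_mul_of_nonneg_left hT2 (mul_nonneg hcard hδ)]
  have habs : (∑ j, ∑ k, b j * Sig j k * b k) - (∑ j, ∑ k, b j * SigT j k * b k)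
      ≤ δ * T ^ 2 := by
    have := abs_le.mp hdiff
    linarith [this.1]
  nlinarith [mul_le_mul_of_nonneg_left habs hcard]
end

section
/- Local quadratic lower bound for the symmetrized Bregman divergence (Lemma 9 of the paper): under the listed hypotheses, for every α₁₁ ∈ ℝ^{1+q₂}, writing b = α₁₁ − ᾱ₁₁, one has bᵀ·Ẽ[ Z·w(γ̂)·ψ_D(α̂₁ᵀg)·( ψ_Y(α₁₁ᵀh) − ψ_Y(ᾱ₁₁ᵀh) )·h ] ≥ C_{g3}·C_{h3} · ( (1 − exp(−C_{h2}·C_{h0}·‖b‖₁)） / (C_{h2}·C_{h0}·‖b‖₁) ) · bᵀΣ̃_h b, where the ratio is interpreted as 1 when b = 0, C_{g3} = exp(−C_{f0}·r_γ)·ψ_D(−C_{g1})·(1−ϱ₄), C_{h3} = ψ_Y′(0)·exp(−C_{h2}·C_{h1}), and Σ̃_h = Ẽ[ Z·w(γ̄)·h·hᵀ ]. -/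
/-!
Both sides are averages over observations of terms proportional to Zᵢ, with
δᵢ = bᵀhᵢ = α₁₁ᵀhᵢ − ᾱ₁₁ᵀhᵢ, so it suffices to compare the i-th terms. Each splits into a
weight-propensity factor and an outcome factor.

Weight-propensity: |γ̂ᵀf − γ̄ᵀf| ≤ C_{f0} r_γ bounds the weight ratio. Integrating the ratio
condition on ψ_D' from −∞ (where ψ_D vanishes) gives ψ_D' ≤ C_{g2} ψ_D, so moving the argument
down by at most C_{g0} r_α costs at most a factor 1 − C_{g2} C_{g0} r_α ≥ 1 − ϱ₄.

Outcome: the ratio condition around 0 gives ψ_Y'(s) ≥ C_{h3} exp(−C_{h2} |s − ᾱ₁₁ᵀh|);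
integrating between the two linear predictors gives
(ψ_Y(u) − ψ_Y(v))(u − v) ≥ (C_{h3}/C_{h2})(1 − e^{−C_{h2}|u−v|}) |u − v|. Since (1 − e^{−x})/x
decreases and |δᵢ| ≤ C_{h0}‖b‖₁, this is at least C_{h3} κ δᵢ², with κ the ratio in the statement.
-/

open Finset Real Filter Set Topology

lemma one_sub_exp_neg_div_nonneg (x : ℝ) : 0 ≤ (1 - exp (-x)) / x := by
  rcases le_total 0 x with hx | hx
  · exact div_nonneg (by simpa using exp_le_one_iff.2 (neg_nonpos.2 hx)) hx
  · exact div_nonneg_of_nonpos (by simpa using one_le_exp_iff.2 (neg_nonneg.2 hx)) hx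

lemma antitoneOn_one_sub_exp_neg_div : AntitoneOn (fun x => (1 - exp (-x)) / x) (Ioi 0) := by
  intro x hx y hy hxy
  have := convexOn_exp.secant_mono (mem_univ 0) (mem_univ (-y)) (mem_univ (-x))
    (by simpa using hy.ne') (by simpa using hx.ne') (neg_le_neg hxy)
  simp only [exp_zero, sub_zero, div_neg, ← neg_div, neg_sub] at this
  exact this

section DerivBounds

variable {ψ ψ' : ℝ → ℝ}

lemma monotoneOn_of_forall_hasDerivAt_nonneg {D : Set ℝ} (hD : Convex ℝ D)
    (hψ : ∀ x, HasDerivAt ψ (ψ' x) x) (hψ' : ∀ x ∈ D, 0 ≤ ψ' x) : MonotoneOn ψ D :=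
  monotoneOn_of_hasDerivWithinAt_nonneg hD (fun x _ => (hψ x).continuousAt.continuousWithinAt)
    (fun x _ => (hψ x).hasDerivWithinAt) fun x hx => hψ' x (interior_subset hx)

lemma div_mul_one_sub_exp_le_sub_of_decay_le_deriv {C c a b : ℝ} (hC : C ≠ 0)
    (hψ : ∀ x, HasDerivAt ψ (ψ' x) x) (hab : a ≤ b)
    (hψ' : ∀ s ∈ Icc a b, c * exp (-(C * (s - a))) ≤ ψ' s) :
    c / C * (1 - exp (-(C * (b - a)))) ≤ ψ b - ψ a := by
  have hG : ∀ s, HasDerivAt (fun s => ψ s + c / C * exp (-(C * (s - a))))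
      (ψ' s - c * exp (-(C * (s - a)))) s := fun s => by
    have h : HasDerivAt (fun s => -(C * (s - a))) (-C) s :=
      (((hasDerivAt_id s).sub_const a).const_mul C).fun_neg.congr_deriv (by ring)
    exact ((hψ s).add (h.exp.const_mul (c / C))).congr_deriv (by field_simp; ring)
  have := monotoneOn_of_forall_hasDerivAt_nonneg (convex_Icc a b) hG
    (fun s hs => sub_nonneg.2 (hψ' s hs)) (left_mem_Icc.2 hab) (right_mem_Icc.2 hab) hab
  simp only [sub_self, mul_zero, neg_zero, exp_zero, mul_one] at this
  linarith

lemma div_mul_one_sub_exp_le_sub_of_growth_le_deriv {C c a b : ℝ} (hC : C ≠ 0)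
    (hψ : ∀ x, HasDerivAt ψ (ψ' x) x) (hab : a ≤ b)
    (hψ' : ∀ s ∈ Icc a b, c * exp (-(C * (b - s))) ≤ ψ' s) :
    c / C * (1 - exp (-(C * (b - a)))) ≤ ψ b - ψ a := by
  have hφ : ∀ x, HasDerivAt (fun x => -ψ (-x)) (ψ' (-x)) x := fun x =>
    ((hψ (-x)).comp x (hasDerivAt_neg x)).neg.congr_deriv (by simp)
  have := div_mul_one_sub_exp_le_sub_of_decay_le_deriv hC hφ (neg_le_neg hab)
    fun s hs => by simpa [sub_eq_add_neg, add_comm] using hψ' (-s) ⟨le_neg.1 hs.2, neg_le.1 hs.1⟩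
  simpa [sub_eq_add_neg, add_comm] using this

lemma deriv_le_mul_of_tendsto_atBot {C : ℝ} (hC : 0 < C) (hψ : ∀ x, HasDerivAt ψ (ψ' x) x)
    (hratio : ∀ u v, ψ' u ≤ ψ' v * exp (C * |u - v|)) (hlim : Tendsto ψ atBot (𝓝 0)) (t : ℝ) :
    ψ' t ≤ C * ψ t := by
  have hincr : ∀ T, 0 ≤ T → ψ' t / C * (1 - exp (-(C * T))) ≤ ψ t - ψ (t - T) := fun T hT => by
    simpa using div_mul_one_sub_exp_le_sub_of_growth_le_deriv (a := t - T) (b := t) (c := ψ' t)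
      hC.ne' hψ (by linarith) fun s hs => by
        have := hratio t s
        rw [abs_of_nonneg (sub_nonneg.2 hs.2), ← div_le_iff₀ (exp_pos _)] at this
        rwa [exp_neg, ← div_eq_mul_inv]
  have hleft : Tendsto (fun T => ψ' t / C * (1 - exp (-(C * T)))) atTop (𝓝 (ψ' t / C)) := by
    simpa using ((tendsto_exp_neg_atTop_nhds_zero.comp
      (tendsto_id.const_mul_atTop hC)).const_sub 1).const_mul (ψ' t / C)
  have hright : Tendsto (fun T => ψ t - ψ (t - T)) atTop (𝓝 (ψ t)) := by
    simpa [← sub_eq_add_neg] using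
      (hlim.comp (tendsto_atBot_add_const_left _ t tendsto_neg_atTop_atBot)).const_sub (ψ t)
  have := le_of_tendsto_of_tendsto hleft hright (eventually_atTop.2 ⟨0, hincr⟩)
  rwa [div_le_iff₀' hC] at this

lemma one_sub_mul_mul_le_of_deriv_le_mul {C u v Δ : ℝ} (hC : 0 ≤ C)
    (hψ : ∀ x, HasDerivAt ψ (ψ' x) x) (hmono : Monotone ψ) (hnonneg : ∀ x, 0 ≤ ψ x)
    (hderiv : ∀ x, ψ' x ≤ C * ψ x) (huv : |u - v| ≤ Δ) :
    (1 - C * Δ) * ψ v ≤ ψ u := by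
  rcases le_total v u with hvu | huv'
  · nlinarith [hmono hvu, hnonneg v, mul_nonneg hC ((abs_nonneg _).trans huv)]
  · have hmonoOn : MonotoneOn (fun s => C * ψ v * s - ψ s) (Iic v) :=
      monotoneOn_of_forall_hasDerivAt_nonneg (convex_Iic v)
        (fun s => ((hasDerivAt_id s).const_mul (C * ψ v)).sub (hψ s))
        fun s hs => by
          simpa using (hderiv s).trans (mul_le_mul_of_nonneg_left (hmono hs) hC)
    have := hmonoOn huv' self_mem_Iic huv'
    have hvu : v - u ≤ Δ := by rw [abs_sub_comm, abs_of_nonneg (by linarith)] at huv; exact huv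
    nlinarith [mul_le_mul_of_nonneg_left hvu (mul_nonneg hC (hnonneg v))]

lemma mul_exp_neg_mul_exp_neg_abs_le {C K v : ℝ} (hC : 0 ≤ C) (h0 : 0 ≤ ψ' 0)
    (hratio : ∀ u v, ψ' u ≤ ψ' v * exp (C * |u - v|)) (hv : |v| ≤ K) (s : ℝ) :
    ψ' 0 * exp (-(C * K)) * exp (-(C * |s - v|)) ≤ ψ' s := by
  have hs : |s| ≤ K + |s - v| := by
    have := abs_add_le (s - v) v
    rw [sub_add_cancel] at this
    linarith
  have h := hratio 0 s
  rw [zero_sub, abs_neg, ← div_le_iff₀ (exp_pos _), div_eq_mul_inv, ← exp_neg] at h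
  calc ψ' 0 * exp (-(C * K)) * exp (-(C * |s - v|))
      = ψ' 0 * exp (-(C * (K + |s - v|))) := by rw [mul_assoc, ← exp_add]; ring_nf
    _ ≤ ψ' 0 * exp (-(C * |s|)) := by gcongr
    _ ≤ ψ' s := h

lemma div_mul_one_sub_exp_mul_abs_le {C c v : ℝ} (hC : C ≠ 0)
    (hψ : ∀ x, HasDerivAt ψ (ψ' x) x) (hψ' : ∀ s, c * exp (-(C * |s - v|)) ≤ ψ' s) (u : ℝ) :
    c / C * (1 - exp (-(C * |u - v|))) * |u - v| ≤ (ψ u - ψ v) * (u - v) := by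
  rcases le_total v u with hvu | huv
  · have := div_mul_one_sub_exp_le_sub_of_decay_le_deriv hC hψ hvu fun s hs => by
      simpa [abs_of_nonneg (sub_nonneg.2 hs.1)] using hψ' s
    rw [abs_of_nonneg (sub_nonneg.2 hvu)]
    exact mul_le_mul_of_nonneg_right this (sub_nonneg.2 hvu)
  · have := div_mul_one_sub_exp_le_sub_of_growth_le_deriv hC hψ huv fun s hs => by
      simpa [abs_sub_comm s v, abs_of_nonneg (sub_nonneg.2 hs.2)] using hψ' s
    rw [abs_sub_comm, abs_of_nonneg (sub_nonneg.2 huv)]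
    nlinarith [mul_le_mul_of_nonneg_right this (sub_nonneg.2 huv)]

lemma one_sub_mul_apply_neg_le_of_tendsto_atBot {C K Δ ρ x y : ℝ} (hC : 0 < C)
    (hψ : ∀ x, HasDerivAt ψ (ψ' x) x) (hψ' : ∀ x, 0 ≤ ψ' x)
    (hratio : ∀ u v, ψ' u ≤ ψ' v * exp (C * |u - v|)) (hlim : Tendsto ψ atBot (𝓝 0))
    (hy : |y| ≤ K) (hxy : |x - y| ≤ Δ) (hρ : C * Δ ≤ ρ) :
    (1 - ρ) * ψ (-K) ≤ ψ x := by
  have hmono : Monotone ψ := monotone_of_hasDerivAt_nonneg hψ hψ'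
  have hnonneg := hmono.le_of_tendsto hlim
  rcases le_total ρ 1 with hρ1 | hρ1
  · calc (1 - ρ) * ψ (-K) ≤ (1 - C * Δ) * ψ y :=
          mul_le_mul (by linarith) (hmono (neg_le_of_abs_le hy)) (hnonneg _) (by linarith)
      _ ≤ ψ x := one_sub_mul_mul_le_of_deriv_le_mul hC.le hψ hmono hnonneg
          (deriv_le_mul_of_tendsto_atBot hC hψ hratio hlim) hxy
  · exact (mul_nonpos_of_nonpos_of_nonneg (by linarith) (hnonneg _)).trans (hnonneg x)

lemma mul_one_sub_exp_neg_div_mul_sq_le {C c v u M : ℝ} (hC : 0 < C) (hc : 0 ≤ c)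
    (hψ : ∀ x, HasDerivAt ψ (ψ' x) x) (hψ' : ∀ s, c * exp (-(C * |s - v|)) ≤ ψ' s)
    (huv : |u - v| ≤ M) :
    c * ((1 - exp (-(C * M))) / (C * M)) * (u - v) ^ 2 ≤ (ψ u - ψ v) * (u - v) := by
  rcases eq_or_ne u v with rfl | hne
  · simp
  have hd : 0 < |u - v| := abs_pos.2 (sub_ne_zero.2 hne)
  have hslope : (1 - exp (-(C * M))) / (C * M) ≤ (1 - exp (-(C * |u - v|))) / (C * |u - v|) :=
    antitoneOn_one_sub_exp_neg_div (mul_pos hC hd) (mul_pos hC (hd.trans_le huv))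
      (mul_le_mul_of_nonneg_left huv hC.le)
  calc c * ((1 - exp (-(C * M))) / (C * M)) * (u - v) ^ 2
      ≤ c * ((1 - exp (-(C * |u - v|))) / (C * |u - v|)) * |u - v| ^ 2 := by
        rw [sq_abs]; gcongr
    _ = c / C * (1 - exp (-(C * |u - v|))) * |u - v| := by field_simp
    _ ≤ (ψ u - ψ v) * (u - v) := div_mul_one_sub_exp_mul_abs_le hC.ne' hψ hψ' u

end DerivBounds

section FiniteSums

variable {ι m : Type*} [Fintype ι] [Fintype m]

lemma abs_sum_mul_sub_sum_mul_le (a a' x : m → ℝ) {K : ℝ} (hx : ∀ j, |x j| ≤ K) :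
    |∑ j, a j * x j - ∑ j, a' j * x j| ≤ K * ∑ j, |a j - a' j| := by
  rw [← sum_sub_distrib, mul_sum]
  refine (abs_sum_le_sum_abs _ _).trans (sum_le_sum fun j _ => ?_)
  rw [← sub_mul, abs_mul, mul_comm]
  exact mul_le_mul_of_nonneg_right (hx j) (abs_nonneg _)

lemma exp_neg_sum_mul_mul_exp_neg_le (a a' x : m → ℝ) {K r : ℝ} (hK : 0 ≤ K)
    (hx : ∀ j, |x j| ≤ K) (hr : ∑ j, |a j - a' j| ≤ r) :
    exp (-∑ j, a' j * x j) * exp (-(K * r)) ≤ exp (-∑ j, a j * x j) := by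
  have := abs_sub_le_iff.1 ((abs_sum_mul_sub_sum_mul_le a a' x hx).trans
    (mul_le_mul_of_nonneg_left hr hK))
  rw [← exp_add]
  exact exp_le_exp.2 (by linarith)

variable {R : Type*} [CommSemiring R]

lemma sum_mul_mul_sum_mul (b : m → R) (c : ι → R) (x : ι → m → R) (t : R) :
    ∑ j, b j * (t * ∑ i, c i * x i j) = t * ∑ i, c i * ∑ j, b j * x i j := by
  simp only [mul_sum]
  rw [sum_comm]
  exact sum_congr rfl fun i _ => sum_congr rfl fun j _ => by ring

lemma sum_sum_mul_mul_sum_mul_mul (b : m → R) (c : ι → R) (x : ι → m → R) (t : R) :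
    ∑ j, ∑ k, b j * (t * ∑ i, c i * x i j * x i k) * b k
      = t * ∑ i, c i * (∑ j, b j * x i j) ^ 2 := by
  simp only [sq, mul_sum, sum_mul]
  refine (sum_congr rfl fun j _ => sum_comm).trans ?_
  rw [sum_comm]
  exact sum_congr rfl fun i _ => sum_congr rfl fun j _ => sum_congr rfl fun k _ => by ring

end FiniteSums

lemma le_exp_neg_sum_mul_mul_apply {ι κ : Type*} [Fintype ι] [Fintype κ] {ψ ψ' : ℝ → ℝ}
    {C Kf Kg K r s ρ : ℝ} (hC : 0 < C) (hψ : ∀ x, HasDerivAt ψ (ψ' x) x) (hψ' : ∀ x, 0 ≤ ψ' x)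
    (hratio : ∀ u v, ψ' u ≤ ψ' v * exp (C * |u - v|)) (hlim : Tendsto ψ atBot (𝓝 0))
    {f γ γ' : ι → ℝ} {g α α' : κ → ℝ} (hKf : 0 ≤ Kf) (hf : ∀ j, |f j| ≤ Kf) (hKg : 0 ≤ Kg)
    (hg : ∀ j, |g j| ≤ Kg) (hα'g : |∑ j, α' j * g j| ≤ K)
    (hγ : ∑ j, |γ j - γ' j| ≤ r) (hα : ∑ j, |α j - α' j| ≤ s)
    (hρ : ρ = Kg * s * C * exp (C * Kg * s)) (hρ1 : ρ < 1) :
    exp (-(Kf * r)) * ψ (-K) * (1 - ρ) * exp (-∑ j, γ' j * f j)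
      ≤ exp (-∑ j, γ j * f j) * ψ (∑ j, α j * g j) := by
  have hs : 0 ≤ C * Kg * s :=
    mul_nonneg (mul_nonneg hC.le hKg) ((sum_nonneg fun j _ => abs_nonneg _).trans hα)
  have hCρ : C * (Kg * s) ≤ ρ := by
    rw [hρ]
    nlinarith [one_le_exp hs]
  calc exp (-(Kf * r)) * ψ (-K) * (1 - ρ) * exp (-∑ j, γ' j * f j)
      = exp (-∑ j, γ' j * f j) * exp (-(Kf * r)) * ((1 - ρ) * ψ (-K)) := by ring
    _ ≤ exp (-∑ j, γ j * f j) * ψ (∑ j, α j * g j) :=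
        mul_le_mul (exp_neg_sum_mul_mul_exp_neg_le _ _ _ hKf hf hγ)
          (one_sub_mul_apply_neg_le_of_tendsto_atBot hC hψ hψ' hratio hlim hα'g
            ((abs_sum_mul_sub_sum_mul_le _ _ _ hg).trans (mul_le_mul_of_nonneg_left hα hKg)) hCρ)
          (mul_nonneg (by linarith)
            ((monotone_of_hasDerivAt_nonneg hψ hψ').le_of_tendsto hlim _)) (exp_pos _).le

theorem stmt_16_general (n p q1 q2 : ℕ)
    (Z : Fin n → ℝ) (hZ : ∀ i, Z i = 0 ∨ Z i = 1)
    (fV : Fin n → Fin (p + 1) → ℝ)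
    (gV : Fin n → Fin (q1 + 1) → ℝ)
    (hV : Fin n → Fin (q2 + 1) → ℝ)
    (ψD ψD' ψY ψY' : ℝ → ℝ)
    (hψD : ∀ x, HasDerivAt ψD (ψD' x) x) (hψY : ∀ x, HasDerivAt ψY (ψY' x) x)
    (hψD' : ∀ x, 0 ≤ ψD' x) (hψY' : ∀ x, 0 ≤ ψY' x)
    (Cg2 Ch2 : ℝ) (hCg2 : 0 < Cg2) (hCh2 : 0 < Ch2)
    (hψDratio : ∀ u v : ℝ, ψD' u ≤ ψD' v * Real.exp (Cg2 * |u - v|))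
    (hψYratio : ∀ u v : ℝ, ψY' u ≤ ψY' v * Real.exp (Ch2 * |u - v|))
    (hψDlim : Filter.Tendsto ψD Filter.atBot (nhds 0))
    (γhat γbar : Fin (p + 1) → ℝ)
    (α1hat α1bar : Fin (q1 + 1) → ℝ)
    (α11bar : Fin (q2 + 1) → ℝ)
    -- bounded covariates and linear predictors
    (Cf0 Cg0 Cg1 Ch0 Ch1 : ℝ)
    (hCf0 : ∀ i j, |fV i j| ≤ Cf0)
    (hCg0 : ∀ i j, |gV i j| ≤ Cg0)
    (hCg1 : ∀ i, |∑ j, α1bar j * gV i j| ≤ Cg1)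
    (hCh0 : ∀ i j, |hV i j| ≤ Ch0)
    (hCh1 : ∀ i, |∑ j, α11bar j * hV i j| ≤ Ch1)
    -- weights and the sample matrix
    (what wbar : Fin n → ℝ)
    (hwhat : ∀ i, what i = Real.exp (-(∑ j, γhat j * fV i j)))
    (hwbar : ∀ i, wbar i = Real.exp (-(∑ j, γbar j * fV i j)))
    (SigTh : Fin (q2 + 1) → Fin (q2 + 1) → ℝ)
    (hSigTh : ∀ j k, SigTh j k = (1 / (n : ℝ)) * ∑ i, Z i * wbar i * hV i j * hV i k)
    -- closeness of the first-stage estimators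
    (rγ rα : ℝ)
    (hγL1 : ∑ j, |γhat j - γbar j| ≤ rγ)
    (hα1L1 : ∑ j, |α1hat j - α1bar j| ≤ rα)
    (ϱ4 : ℝ) (hϱ4def : ϱ4 = Cg0 * rα * Cg2 * Real.exp (Cg2 * Cg0 * rα))
    (hϱ4 : ϱ4 < 1)
    -- the constants of the lemma
    (Cg3 : ℝ) (hCg3 : Cg3 = Real.exp (-(Cf0 * rγ)) * ψD (-Cg1) * (1 - ϱ4))
    (Ch3 : ℝ) (hCh3 : Ch3 = ψY' 0 * Real.exp (-(Ch2 * Ch1))) :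
    ∀ α11 : Fin (q2 + 1) → ℝ,
      Cg3 * Ch3 *
          (if (∑ j, |α11 j - α11bar j|) = 0 then 1
            else (1 - Real.exp (-(Ch2 * Ch0 * ∑ j, |α11 j - α11bar j|)))
              / (Ch2 * Ch0 * ∑ j, |α11 j - α11bar j|)) *
          (∑ j, ∑ k, (α11 j - α11bar j) * SigTh j k * (α11 k - α11bar k))
        ≤ ∑ j, (α11 j - α11bar j) *
            ((1 / (n : ℝ)) * ∑ i, Z i * what i * ψD (∑ l, α1hat l * gV i l)
              * (ψY (∑ l, α11 l * hV i l) - ψY (∑ l, α11bar l * hV i l)) * hV i j) := by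
  intro α11
  set B := ∑ j, |α11 j - α11bar j|
  by_cases hB : B = 0
  · have hb : ∀ j, α11 j - α11bar j = 0 := fun j =>
      abs_eq_zero.1 ((sum_eq_zero_iff_of_nonneg fun j _ => abs_nonneg _).1 hB j (mem_univ j))
    simp [hb]
  rw [if_neg hB]
  set κ := (1 - exp (-(Ch2 * Ch0 * B))) / (Ch2 * Ch0 * B) with hκ
  simp_rw [hSigTh]
  rw [sum_sum_mul_mul_sum_mul_mul, sum_mul_mul_sum_mul, mul_left_comm, mul_sum]
  refine mul_le_mul_of_nonneg_left (sum_le_sum fun i _ => ?_) (by positivity)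
  simp only [sub_mul, sum_sub_distrib]
  set u := ∑ l, α11 l * hV i l
  set v := ∑ l, α11bar l * hV i l
  set x := ∑ l, α1hat l * gV i l
  rcases hZ i with hZi | hZi <;> rw [hZi]
  · simp
  have hprop : Cg3 * wbar i ≤ what i * ψD x := by
    rw [hCg3, hwhat, hwbar]
    exact le_exp_neg_sum_mul_mul_apply hCg2 hψD hψD' hψDratio hψDlim
      ((abs_nonneg _).trans (hCf0 i 0)) (hCf0 i) ((abs_nonneg _).trans (hCg0 i 0)) (hCg0 i)
      (hCg1 i) hγL1 hα1L1 hϱ4def hϱ4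
  have hCh3' : 0 ≤ Ch3 := hCh3 ▸ mul_nonneg (hψY' 0) (exp_pos _).le
  have hout : Ch3 * κ * (u - v) ^ 2 ≤ (ψY u - ψY v) * (u - v) := by
    rw [hκ, mul_assoc Ch2 Ch0]
    exact mul_one_sub_exp_neg_div_mul_sq_le hCh2 hCh3' hψY
      (hCh3 ▸ mul_exp_neg_mul_exp_neg_abs_le hCh2.le (hψY' 0) hψYratio (hCh1 i))
      (abs_sum_mul_sub_sum_mul_le _ _ _ (hCh0 i))
  have hκ0 : 0 ≤ κ := one_sub_exp_neg_div_nonneg _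
  calc _ = Cg3 * wbar i * (Ch3 * κ * (u - v) ^ 2) := by ring
    _ ≤ what i * ψD x * ((ψY u - ψY v) * (u - v)) := mul_le_mul hprop hout (by positivity)
          (mul_nonneg (hwhat i ▸ (exp_pos _).le)
            ((monotone_of_hasDerivAt_nonneg hψD hψD').le_of_tendsto hψDlim x))
    _ = _ := by ring

/-- Local quadratic lower bound for the symmetrized Bregman divergence
(Lemma 9 of the paper). -/
theorem stmt_16 (n p q1 q2 : ℕ) (hn : 1 ≤ n)
    (Z : Fin n → ℝ) (hZ : ∀ i, Z i = 0 ∨ Z i = 1)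
    (fV : Fin n → Fin (p + 1) → ℝ)
    (gV : Fin n → Fin (q1 + 1) → ℝ)
    (hV : Fin n → Fin (q2 + 1) → ℝ)
    (ψD ψD' ψY ψY' : ℝ → ℝ)
    (hψD : ∀ x, HasDerivAt ψD (ψD' x) x) (hψY : ∀ x, HasDerivAt ψY (ψY' x) x)
    (hψD' : ∀ x, 0 ≤ ψD' x) (hψY' : ∀ x, 0 ≤ ψY' x)
    (Cg2 Ch2 : ℝ) (hCg2 : 0 < Cg2) (hCh2 : 0 < Ch2)
    (hψDratio : ∀ u v : ℝ, ψD' u ≤ ψD' v * Real.exp (Cg2 * |u - v|))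
    (hψYratio : ∀ u v : ℝ, ψY' u ≤ ψY' v * Real.exp (Ch2 * |u - v|))
    (hψDlim : Filter.Tendsto ψD Filter.atBot (nhds 0))
    (γhat γbar : Fin (p + 1) → ℝ)
    (α1hat α1bar : Fin (q1 + 1) → ℝ)
    (α11bar : Fin (q2 + 1) → ℝ)
    -- bounded covariates and linear predictors
    (Cf0 Cg0 Cg1 Ch0 Ch1 : ℝ)
    (hCf0 : ∀ i j, |fV i j| ≤ Cf0)
    (hCg0 : ∀ i j, |gV i j| ≤ Cg0)
    (hCg1 : ∀ i, |∑ j, α1bar j * gV i j| ≤ Cg1)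
    (hCh0 : ∀ i j, |hV i j| ≤ Ch0)
    (hCh1 : ∀ i, |∑ j, α11bar j * hV i j| ≤ Ch1)
    -- weights and the sample matrix
    (what wbar : Fin n → ℝ)
    (hwhat : ∀ i, what i = Real.exp (-(∑ j, γhat j * fV i j)))
    (hwbar : ∀ i, wbar i = Real.exp (-(∑ j, γbar j * fV i j)))
    (SigTh : Fin (q2 + 1) → Fin (q2 + 1) → ℝ)
    (hSigTh : ∀ j k, SigTh j k = (1 / (n : ℝ)) * ∑ i, Z i * wbar i * hV i j * hV i k)
    -- closeness of the first-stage estimators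
    (rγ rα : ℝ) (hrγ0 : 0 ≤ rγ) (hrα0 : 0 ≤ rα)
    (hγL1 : ∑ j, |γhat j - γbar j| ≤ rγ)
    (hα1L1 : ∑ j, |α1hat j - α1bar j| ≤ rα)
    (ϱ4 : ℝ) (hϱ4def : ϱ4 = Cg0 * rα * Cg2 * Real.exp (Cg2 * Cg0 * rα))
    (hϱ4 : ϱ4 < 1)
    -- the constants of the lemma
    (Cg3 : ℝ) (hCg3 : Cg3 = Real.exp (-(Cf0 * rγ)) * ψD (-Cg1) * (1 - ϱ4))
    (Ch3 : ℝ) (hCh3 : Ch3 = ψY' 0 * Real.exp (-(Ch2 * Ch1))) :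
    ∀ α11 : Fin (q2 + 1) → ℝ,
      Cg3 * Ch3 *
          (if (∑ j, |α11 j - α11bar j|) = 0 then 1
            else (1 - Real.exp (-(Ch2 * Ch0 * ∑ j, |α11 j - α11bar j|)))
              / (Ch2 * Ch0 * ∑ j, |α11 j - α11bar j|)) *
          (∑ j, ∑ k, (α11 j - α11bar j) * SigTh j k * (α11 k - α11bar k))
        ≤ ∑ j, (α11 j - α11bar j) *
            ((1 / (n : ℝ)) * ∑ i, Z i * what i * ψD (∑ l, α1hat l * gV i l)
              * (ψY (∑ l, α11 l * hV i l) - ψY (∑ l, α11bar l * hV i l)) * hV i j) :=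
  stmt_16_general n p q1 q2 Z hZ fV gV hV ψD ψD' ψY ψY' hψD hψY hψD' hψY' Cg2 Ch2 hCg2 hCh2 hψDratio
    hψYratio hψDlim γhat γbar α1hat α1bar α11bar Cf0 Cg0 Cg1 Ch0 Ch1 hCf0 hCg0 hCg1 hCh0 hCh1 what
    wbar hwhat hwbar SigTh hSigTh rγ rα hγL1 hα1L1 ϱ4 hϱ4def hϱ4 Cg3 hCg3 Ch3 hCh3
end
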